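/- arXiv:2302.09485 — 7 statements merged into one kernel-verified Lean document; each statement's English description precedes it below -/
import Mathlib

section
/- Let $W$ be a finite Weyl group, and let $\mathrm{QBG}(W)$ be its quantum Bruhat graph. Let $v, w \in W$ and let $\mathbf{p}$ be a shortest-length directed path from $v$ to $w$ in $\mathrm{QBG}(W)$. Then all edges of $\mathbf{p}$ are Bruhat edges if and only if $v \le w$ in the Bruhat order on $W$. -/
namespace Stmt0

/-- Data of the quantum Bruhat graph of a finite Weyl group `W`:
a set `Pos` of positive roots, the reflection `s_α ∈ W` for each positive root,
the length function `ℓ`, and the pairing `⟨ρ, α^∨⟩` (a positive integer). -/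
structure QBGData (W : Type*) [Group W] where
  Pos : Type*
  refl : Pos → W
  len : W → ℕ
  rhoPair : Pos → ℕ
  rhoPair_pos : ∀ α, 1 ≤ rhoPair α

variable {W : Type*} [Group W] (d : QBGData W)

/-- A Bruhat edge `x → y = x s_α` of `QBG(W)`: `ℓ(y) = ℓ(x) + 1`. -/
def BruhatEdge (x y : W) : Prop :=
  ∃ α, y = x * d.refl α ∧ d.len y = d.len x + 1

/-- A quantum edge `x → y = x s_α` of `QBG(W)`: `ℓ(y) = ℓ(x) + 1 - 2⟨ρ,α^∨⟩`. -/
def QuantumEdge (x y : W) : Prop :=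
  ∃ α, y = x * d.refl α ∧ d.len y + 2 * d.rhoPair α = d.len x + 1

/-- An edge of the quantum Bruhat graph. -/
def Edge (x y : W) : Prop := BruhatEdge d x y ∨ QuantumEdge d x y

/-- `IsPath d R v p w`: the list `p` of vertices is a directed path from `v` to `w`
whose consecutive steps are related by `R`; its length is `p.length`. -/
def IsPath (R : W → W → Prop) (v : W) (p : List W) (w : W) : Prop :=
  List.Chain R v p ∧ (v :: p).getLast (List.cons_ne_nil v p) = w

/-- The Bruhat order: `v ≤ w` iff there is a directed path of Bruhat edges
from `v` to `w`. -/
def bruhatLE (v w : W) : Prop := ∃ p, IsPath (BruhatEdge d) v p w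

/-!
Every edge of the quantum Bruhat graph raises the length by at most one: Bruhat edges by exactly
one, while a quantum edge lowers it, since `⟨ρ, α^∨⟩ ≥ 1`. Hence a Bruhat path from `v` to `w` has
`ℓ(w) - ℓ(v)` edges, whereas a path through a quantum edge has at least `ℓ(w) - ℓ(v) + 2`, so it
cannot be shortest once a Bruhat path exists.
-/

section LengthAlongChains

variable {α : Type*} {R S : α → α → Prop} {f : α → ℕ}

lemma getLast_eq_add_length_of_isChain (hR : ∀ x y, R x y → f y = f x + 1) :
    ∀ {v : α} {p : List α} (_ : (v :: p).IsChain R),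
      f ((v :: p).getLast (List.cons_ne_nil v p)) = f v + p.length
  | _, [], _ => by simp
  | v, a :: p, h => by
    rw [List.isChain_cons_cons] at h
    rw [List.getLast_cons (List.cons_ne_nil a p), getLast_eq_add_length_of_isChain hR h.2,
      hR v a h.1, List.length_cons]
    ring

lemma getLast_le_add_length_of_isChain (hS : ∀ x y, S x y → f y ≤ f x + 1) :
    ∀ {v : α} {p : List α} (_ : (v :: p).IsChain S),
      f ((v :: p).getLast (List.cons_ne_nil v p)) ≤ f v + p.length
  | _, [], _ => by simp
  | v, a :: p, h => by
    rw [List.isChain_cons_cons] at h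
    have := getLast_le_add_length_of_isChain hS h.2
    have := hS v a h.1
    rw [List.getLast_cons (List.cons_ne_nil a p), List.length_cons]
    omega

lemma getLast_add_two_le_add_length_of_not_isChain (hS : ∀ x y, S x y → f y ≤ f x + 1)
    (hSR : ∀ x y, S x y → ¬ R x y → f y + 1 ≤ f x) :
    ∀ {v : α} {p : List α} (_ : (v :: p).IsChain S) (_ : ¬ (v :: p).IsChain R),
      f ((v :: p).getLast (List.cons_ne_nil v p)) + 2 ≤ f v + p.length
  | _, [], _, hR => absurd (List.isChain_singleton _) hR
  | v, a :: p, h, hR => by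
    rw [List.isChain_cons_cons] at h hR
    rw [List.getLast_cons (List.cons_ne_nil a p), List.length_cons]
    by_cases hva : R v a
    · have := getLast_add_two_le_add_length_of_not_isChain hS hSR h.2 (fun hp => hR ⟨hva, hp⟩)
      have := hS v a h.1
      omega
    · have := getLast_le_add_length_of_isChain hS h.2
      have := hSR v a h.1 hva
      omega

end LengthAlongChains

lemma BruhatEdge.len_eq {x y : W} (h : BruhatEdge d x y) : d.len y = d.len x + 1 :=
  h.choose_spec.2

lemma QuantumEdge.len_add_one_le {x y : W} (h : QuantumEdge d x y) : d.len y + 1 ≤ d.len x := by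
  obtain ⟨α, -, hlen⟩ := h
  have := d.rhoPair_pos α
  omega

lemma Edge.len_le {x y : W} (h : Edge d x y) : d.len y ≤ d.len x + 1 :=
  h.elim (fun hB => (hB.len_eq d).le) (fun hQ => by have := hQ.len_add_one_le d; omega)

lemma Edge.len_add_one_le_of_not_bruhatEdge {x y : W} (h : Edge d x y)
    (hB : ¬ BruhatEdge d x y) : d.len y + 1 ≤ d.len x :=
  (h.resolve_left hB).len_add_one_le d

/-- Let `p` be a shortest-length directed path from `v` to `w` in `QBG(W)`.
Then all edges of `p` are Bruhat edges iff `v ≤ w` in the Bruhat order. -/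
theorem shortest_path_bruhat_iff (v w : W) (p : List W)
    (hp : IsPath (Edge d) v p w)
    (hshort : ∀ q : List W, IsPath (Edge d) v q w → p.length ≤ q.length) :
    List.Chain (BruhatEdge d) v p ↔ bruhatLE d v w := by
  refine ⟨fun hB => ⟨p, hB, hp.2⟩, ?_⟩
  rintro ⟨q, hq, hqw⟩
  by_contra hpB
  have hqp := hshort q ⟨List.IsChain.imp (fun _ _ => Or.inl) hq, hqw⟩
  have hq_len : d.len w = d.len v + q.length :=
    hqw ▸ getLast_eq_add_length_of_isChain (fun _ _ h => h.len_eq d) hq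
  have hp_len : d.len w + 2 ≤ d.len v + p.length :=
    hp.2 ▸ getLast_add_two_le_add_length_of_not_isChain (fun _ _ h => h.len_le d)
      (fun _ _ h => h.len_add_one_le_of_not_bruhatEdge d) hp.1 hpB
  omega

end Stmt0
end

section
/- Let $W = S_{n+1}$ be the symmetric group with simple reflections $s_1, \ldots, s_n$, and let $K \subset \{1, \ldots, n\}$. Let $m \in \{1,\ldots,n\} \setminus K$, let $w \in W$ be a minimal-length coset representative for $W/W_{I \setminus \{m\}}$ that also lies in $W_{I \setminus K}$, and let $v \in W_K$. Then the minimum element (in Bruhat order) of the set $\{ y \in w W_{I \setminus \{m\}} \mid y \ge v \}$ equals $wv$. -/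
/-
Write `J = I ∖ {m}`. As `w ∈ W^J`, lengths add up on `w W_J`: `ℓ(wu) = ℓ(w) + ℓ(u)`.
Induct on `ℓ(w)` by splitting off a left descent, `w = s_i w'` with `w' ∈ W^J`; since
`w ∈ W_{I∖K}` we have `i ∉ K`, hence `s_i v > v`. Deodhar's lifting property turns `v ≤ s_i w' u`
into `v ≤ w' u`, induction gives `w' v ≤ w' u`, and lifting once more (now `s_i w' u > w' u`)
gives `w v ≤ w u`. The same induction shows `v ≤ w v`.
-/

namespace Stmt1

/-- The simple transposition `s_i = (i, i+1)` of `S_{n+1} ⊂ Perm ℕ`. -/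
def s (i : ℕ) : Equiv.Perm ℕ := Equiv.swap i (i + 1)

/-- The number of inversions of `w` among the letters `1, …, n+1`. -/
def len (n : ℕ) (w : Equiv.Perm ℕ) : ℕ :=
  ((Finset.Icc 1 (n + 1) ×ˢ Finset.Icc 1 (n + 1)).filter
    (fun q => q.1 < q.2 ∧ w q.2 < w q.1)).card

/-- The standard parabolic subgroup `W_J` generated by `{s_i ∣ i ∈ J}`. -/
def parab (J : Finset ℕ) : Subgroup (Equiv.Perm ℕ) :=
  Subgroup.closure (s '' J)

/-- The Bruhat order on `S_{n+1}`: the reflexive-transitive closure of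
`x < x·t` for a transposition `t` with `ℓ(x·t) > ℓ(x)`. -/
def bruhatLE (n : ℕ) : Equiv.Perm ℕ → Equiv.Perm ℕ → Prop :=
  Relation.ReflTransGen (fun x y => ∃ i ∈ Finset.Icc 1 (n + 1), ∃ j ∈ Finset.Icc 1 (n + 1),
    i ≠ j ∧ y = x * Equiv.swap i j ∧ len n x < len n y)

/-- `w` is a minimal-length coset representative for `W/W_J`. -/
def IsMinRep (n : ℕ) (J : Finset ℕ) (w : Equiv.Perm ℕ) : Prop :=
  ∀ u ∈ parab J, len n w ≤ len n (w * u)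

open Equiv Finset
open scoped Pointwise

lemma s_apply (i p : ℕ) : s i p = if p = i then i + 1 else if p = i + 1 then i else p := by
  simp [s, Equiv.swap_apply_def]

lemma s_mul_s_mul (i : ℕ) (x : Perm ℕ) : s i * (s i * x) = x := swap_mul_self_mul _ _ _

lemma eq_and_eq_of_not_s_lt {i a b : ℕ} (hab : a < b) (h : ¬ s i a < s i b) :
    a = i ∧ b = i + 1 := by
  simp only [s_apply] at h
  split_ifs at h <;> omega

lemma s_mul_eq_mul_swap (i : ℕ) (x : Perm ℕ) : s i * x = x * swap (x⁻¹ i) (x⁻¹ (i + 1)) := by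
  rw [swap_apply_apply, inv_inv, s]
  group

lemma mem_Icc_succ {n i : ℕ} (hi : i ∈ Icc 1 n) :
    i ∈ Icc 1 (n + 1) ∧ i + 1 ∈ Icc 1 (n + 1) := by
  simp only [Finset.mem_Icc] at hi ⊢
  omega

def symGroup (n : ℕ) : Subgroup (Perm ℕ) :=
  fixingSubgroup (Perm ℕ) (Finset.Icc 1 (n + 1) : Set ℕ)ᶜ

lemma apply_eq_self_of_mem_symGroup {n : ℕ} {x : Perm ℕ} (hx : x ∈ symGroup n) {p : ℕ}
    (hp : p ∉ Icc 1 (n + 1)) : x p = p :=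
  (mem_fixingSubgroup_iff _).1 hx p hp

lemma apply_mem_Icc_of_mem_symGroup {n : ℕ} {x : Perm ℕ} (hx : x ∈ symGroup n) {p : ℕ}
    (hp : p ∈ Icc 1 (n + 1)) : x p ∈ Icc 1 (n + 1) := by
  by_contra h
  have := apply_eq_self_of_mem_symGroup hx h
  rw [x.injective this] at h
  exact h hp

lemma s_mem_symGroup {n i : ℕ} (hi : i ∈ Icc 1 n) : s i ∈ symGroup n := by
  refine (mem_fixingSubgroup_iff _).2 fun p hp => swap_apply_of_ne_of_ne ?_ ?_ <;>
  · rintro rfl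
    simp only [Set.mem_compl_iff, Finset.mem_coe, Finset.mem_Icc] at hp hi
    omega

lemma parab_le_symGroup {n : ℕ} {J : Finset ℕ} (hJ : J ⊆ Icc 1 n) : parab J ≤ symGroup n :=
  (Subgroup.closure_le _).2 <| by
    rintro _ ⟨i, hi, rfl⟩
    exact s_mem_symGroup (hJ hi)

lemma eq_one_of_strictMono {x : Perm ℕ} (hx : StrictMono x) : x = 1 :=
  Equiv.ext <| congrFun <| (hx.range_inj strictMono_id).1 <| by simp

lemma exists_descent {n : ℕ} {x : Perm ℕ} (hx : x ∈ symGroup n) (h1 : x ≠ 1) :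
    ∃ i ∈ Icc 1 n, x (i + 1) < x i := by
  by_contra! hasc
  refine h1 (eq_one_of_strictMono (strictMono_nat_of_lt_succ fun p => ?_))
  have hfix : ∀ q ∉ Icc 1 (n + 1), x q = q := fun q hq => apply_eq_self_of_mem_symGroup hx hq
  have hmem : ∀ q ∈ Icc 1 (n + 1), x q ∈ Icc 1 (n + 1) :=
    fun q hq => apply_mem_Icc_of_mem_symGroup hx hq
  have hne : x p ≠ x (p + 1) := fun h => by simpa using x.injective h
  simp only [Finset.mem_Icc] at hasc hfix hmem
  rcases Nat.lt_or_ge p 1 with h | h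
  · obtain rfl : p = 0 := by omega
    have := hmem 1 (by omega)
    show x 0 < x 1
    rw [hfix 0 (by omega)]
    omega
  rcases Nat.lt_or_ge p (n + 1) with h' | h'
  · exact lt_of_le_of_ne (hasc p ⟨h, by omega⟩) hne
  rcases Nat.lt_or_ge p (n + 2) with h'' | h''
  · have := hmem p (by omega); rw [hfix (p + 1) (by omega)]; omega
  · rw [hfix p (by omega), hfix (p + 1) (by omega)]; omega

def invSet (n : ℕ) (x : Perm ℕ) : Finset (ℕ × ℕ) :=
  (Icc 1 (n + 1) ×ˢ Icc 1 (n + 1)).filter (fun q => q.1 < q.2 ∧ x q.2 < x q.1)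

lemma len_eq_card_invSet (n : ℕ) (x : Perm ℕ) : len n x = #(invSet n x) := rfl

lemma mem_invSet {n : ℕ} {x : Perm ℕ} {q : ℕ × ℕ} :
    q ∈ invSet n x ↔
      (q.1 ∈ Icc 1 (n + 1) ∧ q.2 ∈ Icc 1 (n + 1)) ∧ q.1 < q.2 ∧ x q.2 < x q.1 := by
  simp [invSet]

/-- An inversion of `x` is kept if it is one of `x * τ` and moved by `τ` otherwise: this injects
the inversions of `x` into those of `x * τ` other than `(a, b)`. -/
lemma len_lt_len_mul_swap {n a b : ℕ} {x : Perm ℕ} (ha : a ∈ Icc 1 (n + 1))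
    (hb : b ∈ Icc 1 (n + 1)) (hab : a < b) (h : x a < x b) :
    len n x < len n (x * swap a b) := by
  classical
  set τ := swap a b
  let φ : ℕ × ℕ → ℕ × ℕ := fun q => if q ∈ invSet n (x * τ) then q else (τ q.1, τ q.2)
  have hmaps : ∀ q ∈ invSet n x, φ q ∈ (invSet n (x * τ)).erase (a, b) := by
    rintro ⟨p, r⟩ hq
    simp only [φ]
    split_ifs with hq'
    · refine mem_erase.2 ⟨?_, hq'⟩
      rintro ⟨⟩
      simp only [mem_invSet] at hq
      omega
    · simp only [mem_invSet, Perm.mul_apply, mem_erase, ne_eq, Prod.mk.injEq, not_and,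
        not_lt, swap_apply_self, τ] at hq hq' ⊢
      simp only [swap_apply_def, Finset.mem_Icc] at *
      split_ifs at * <;> subst_vars <;> omega
  have hinj : Set.InjOn φ (invSet n x) := by
    rintro ⟨p, r⟩ hq ⟨p', r'⟩ hq' he
    simp only [φ] at he
    split_ifs at he with h1 h2 h2
    · exact he
    · simp only [mem_invSet, Perm.mul_apply, Prod.mk.injEq, Finset.mem_Icc, Finset.mem_coe, τ]
        at hq hq' h1 h2 he
      obtain ⟨rfl, rfl⟩ := he
      simp only [swap_apply_self] at h1
      omega
    · simp only [mem_invSet, Perm.mul_apply, Prod.mk.injEq, Finset.mem_Icc, Finset.mem_coe, τ]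
        at hq hq' h1 h2 he
      obtain ⟨rfl, rfl⟩ := he
      simp only [swap_apply_self] at h2
      omega
    · simp only [Prod.mk.injEq] at he ⊢
      exact ⟨τ.injective he.1, τ.injective he.2⟩
  calc len n x ≤ #((invSet n (x * τ)).erase (a, b)) := card_le_card_of_injOn φ hmaps hinj
    _ < len n (x * τ) := card_erase_lt_of_mem <| by
      simp [mem_invSet, τ, ha, hb, hab, h]

lemma len_mul_s_lt {n i : ℕ} {x : Perm ℕ} (hi : i ∈ Icc 1 n) (h : x (i + 1) < x i) :
    len n (x * s i) < len n x := by
  have := len_lt_len_mul_swap (x := x * s i) (mem_Icc_succ hi).1 (mem_Icc_succ hi).2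
    (lt_add_one i) (by simpa [s] using h)
  rwa [s, mul_swap_mul_self] at this

lemma len_lt_len_s_mul {n i : ℕ} {x : Perm ℕ} (hx : x ∈ symGroup n) (hi : i ∈ Icc 1 n)
    (h : x⁻¹ i < x⁻¹ (i + 1)) : len n x < len n (s i * x) := by
  rw [s_mul_eq_mul_swap]
  exact len_lt_len_mul_swap (apply_mem_Icc_of_mem_symGroup (inv_mem hx) (mem_Icc_succ hi).1)
    (apply_mem_Icc_of_mem_symGroup (inv_mem hx) (mem_Icc_succ hi).2) h (by simp)

lemma bruhatLE_s_mul {n i : ℕ} {x : Perm ℕ} (hx : x ∈ symGroup n) (hi : i ∈ Icc 1 n)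
    (h : len n x < len n (s i * x)) : bruhatLE n x (s i * x) :=
  .single ⟨x⁻¹ i, apply_mem_Icc_of_mem_symGroup (inv_mem hx) (mem_Icc_succ hi).1,
    x⁻¹ (i + 1), apply_mem_Icc_of_mem_symGroup (inv_mem hx) (mem_Icc_succ hi).2,
    by simp, s_mul_eq_mul_swap i x, h⟩

lemma s_mem_parab {J : Finset ℕ} {j : ℕ} (hj : j ∈ J) : s j ∈ parab J :=
  Subgroup.subset_closure ⟨j, hj, rfl⟩

lemma parab_mono {J L : Finset ℕ} (h : J ⊆ L) : parab J ≤ parab L :=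
  Subgroup.closure_mono (Set.image_mono (coe_subset.2 h))

lemma apply_le_iff_of_mem_parab {J : Finset ℕ} {x : Perm ℕ} (hx : x ∈ parab J) {c : ℕ}
    (hc : c ∉ J) (p : ℕ) : x p ≤ c ↔ p ≤ c := by
  have : parab J ≤ MulAction.stabilizer (Perm ℕ) (Set.Iic c) := by
    refine (Subgroup.closure_le _).2 ?_
    rintro _ ⟨j, hj, rfl⟩
    refine MulAction.mem_stabilizer_set.2 fun q => ?_
    have : j ≠ c := fun h => hc (h ▸ hj)
    simp only [Perm.smul_def, Set.mem_Iic, s_apply]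
    split_ifs <;> omega
  exact MulAction.mem_stabilizer_set.1 (this hx) p

lemma apply_lt_apply_succ_of_mem_parab {J : Finset ℕ} {x : Perm ℕ} (hx : x ∈ parab J) {c : ℕ}
    (hc : c ∉ J) : x c < x (c + 1) := by
  have h1 := (apply_le_iff_of_mem_parab hx hc c).2 le_rfl
  have h2 := (apply_le_iff_of_mem_parab hx hc (c + 1)).not.2 (by omega)
  omega

/-- `w ∈ W^J`: no `s_j` with `j ∈ J` is a right descent of `w`. -/
def AscendsOn (J : Finset ℕ) (w : Perm ℕ) : Prop := ∀ j ∈ J, w j < w (j + 1)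

lemma AscendsOn.apply_lt_apply {J : Finset ℕ} {w : Perm ℕ} (hw : AscendsOn J w) {a b : ℕ}
    (hab : a < b) (hJ : ∀ c, a ≤ c → c < b → c ∈ J) : w a < w b := by
  induction b, hab using Nat.le_induction with
  | base => exact hw a (hJ a le_rfl (lt_add_one a))
  | succ b hab ih =>
    exact (ih fun c h1 h2 => hJ c h1 (by omega)).trans (hw b (hJ b (by omega) (lt_add_one b)))

lemma AscendsOn.apply_lt_apply_of_mem_parab {J : Finset ℕ} {w u : Perm ℕ} (hw : AscendsOn J w)
    (hu : u ∈ parab J) {a b : ℕ} (hab : a < b) (h : u b < u a) : w a < w b := by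
  refine hw.apply_lt_apply hab fun c hac hcb => ?_
  by_contra hc
  have := (apply_le_iff_of_mem_parab hu hc a).2 hac
  have := (apply_le_iff_of_mem_parab hu hc b).not.2 (by omega)
  omega

lemma IsMinRep.ascendsOn {n : ℕ} {J : Finset ℕ} {w : Perm ℕ} (hw : IsMinRep n J w)
    (hJ : J ⊆ Icc 1 n) : AscendsOn J w := fun j hj => by
  by_contra h
  have hne : w j ≠ w (j + 1) := fun h => by simpa using w.injective h
  exact (hw (s j) (s_mem_parab hj)).not_gt (len_mul_s_lt (hJ hj) (by omega))

lemma AscendsOn.s_mul {J : Finset ℕ} {w : Perm ℕ} (hw : AscendsOn J w) {i : ℕ}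
    (h : w⁻¹ (i + 1) < w⁻¹ i) : AscendsOn J (s i * w) := fun j hj => by
  by_contra hlt
  obtain ⟨hi, hi'⟩ := eq_and_eq_of_not_s_lt (hw j hj) hlt
  rw [← hi', ← hi] at h
  simp at h

lemma len_mul_of_ascendsOn {n : ℕ} {J : Finset ℕ} (hJ : J ⊆ Icc 1 n) {w u : Perm ℕ}
    (hw : AscendsOn J w) (hu : u ∈ parab J) : len n (w * u) = len n w + len n u := by
  classical
  have huS := parab_le_symGroup hJ hu
  have hu' : u⁻¹ ∈ parab J := inv_mem hu
  rw [len_eq_card_invSet, len_eq_card_invSet, len_eq_card_invSet,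
    ← card_filter_add_card_filter_not (s := invSet n (w * u)) (fun q => u q.2 < u q.1), add_comm]
  congr 1
  · refine card_nbij' (fun q => (u q.1, u q.2)) (fun q => (u⁻¹ q.1, u⁻¹ q.2)) ?_ ?_ ?_ ?_
    · rintro ⟨p, r⟩ hq
      simp only [mem_coe, mem_filter, mem_invSet, Perm.mul_apply] at hq ⊢
      obtain ⟨⟨⟨hp, hr⟩, hpr, hinv⟩, hu⟩ := hq
      have hne : u p ≠ u r := fun h => by simpa [hpr.ne] using u.injective h
      exact ⟨⟨apply_mem_Icc_of_mem_symGroup huS hp, apply_mem_Icc_of_mem_symGroup huS hr⟩,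
        by omega, hinv⟩
    · rintro ⟨a, b⟩ hq
      simp only [mem_coe, mem_filter, mem_invSet, Perm.mul_apply] at hq ⊢
      obtain ⟨⟨ha, hb⟩, hab, hinv⟩ := hq
      have hlt : u⁻¹ a < u⁻¹ b := by
        by_contra hge
        have hne : u⁻¹ a ≠ u⁻¹ b := fun h => by simpa [hab.ne] using u⁻¹.injective h
        exact (hw.apply_lt_apply_of_mem_parab hu' hab (by omega)).not_gt hinv
      refine ⟨⟨⟨apply_mem_Icc_of_mem_symGroup (inv_mem huS) ha,
        apply_mem_Icc_of_mem_symGroup (inv_mem huS) hb⟩, hlt, by simpa using hinv⟩,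
        by simpa using hab.le⟩
    · intro q _
      simp
    · intro q _
      simp
  · congr 1
    ext ⟨p, r⟩
    simp only [mem_filter, mem_invSet, Perm.mul_apply]
    constructor
    · rintro ⟨⟨hpr, hpr', -⟩, h⟩
      exact ⟨hpr, hpr', h⟩
    · rintro ⟨hpr, hpr', h⟩
      refine ⟨⟨hpr, hpr', hw.apply_lt_apply_of_mem_parab hu' h ?_⟩, h⟩
      simpa using hpr'

/-- Deodhar's lifting property (Property Z). -/
lemma bruhatLE.s_mul_or {n i : ℕ} {u y : Perm ℕ} (h : bruhatLE n u y) :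
    bruhatLE n (s i * u) (s i * y) ∨ bruhatLE n (s i * u) y ∧ bruhatLE n u (s i * y) := by
  induction h with
  | refl => exact .inl .refl
  | @tail x y hchain hstep ih =>
    obtain ⟨a, b, ha, hb, hab, rfl, hlen⟩ : ∃ a b, a ∈ Icc 1 (n + 1) ∧ b ∈ Icc 1 (n + 1) ∧
        a < b ∧ y = x * swap a b ∧ len n x < len n y := by
      obtain ⟨a, ha, b, hb, hne, rfl, hlen⟩ := hstep
      rcases hne.lt_or_gt with hab | hab
      · exact ⟨a, b, ha, hb, hab, rfl, hlen⟩
      · exact ⟨b, a, hb, ha, hab, swap_comm a b ▸ rfl, hlen⟩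
    have hxab : x a < x b := by
      by_contra hge
      have hne : x a ≠ x b := fun h => hab.ne (x.injective h)
      refine hlen.not_gt ?_
      simpa [mul_swap_mul_self] using
        len_lt_len_mul_swap (x := x * swap a b) ha hb hab (by simp; omega)
    by_cases hs : (s i * x) a < (s i * x) b
    · have hup : bruhatLE n (s i * x) (s i * (x * swap a b)) := by
        rw [← mul_assoc]
        exact .single ⟨a, ha, b, hb, hab.ne, rfl, len_lt_len_mul_swap ha hb hab hs⟩
      rcases ih with h | ⟨h1, h2⟩
      · exact .inl (h.trans hup)
      · exact .inr ⟨h1.tail ⟨a, ha, b, hb, hab.ne, rfl, hlen⟩, h2.trans hup⟩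
    · obtain ⟨hxa, hxb⟩ := eq_and_eq_of_not_s_lt hxab hs
      have hsx : s i * x = x * swap a b := by
        rw [s_mul_eq_mul_swap, ← hxb, ← hxa]
        simp
      rw [← hsx, s_mul_s_mul]
      rcases ih with h | ⟨h1, -⟩
      · exact .inr ⟨h, hchain⟩
      · exact .inl h1

lemma bruhatLE_of_bruhatLE_s_mul {n i : ℕ} {u y : Perm ℕ} (hu : bruhatLE n u (s i * u))
    (h : bruhatLE n u (s i * y)) : bruhatLE n u y := by
  rcases h.s_mul_or (i := i) with h' | ⟨-, h'⟩ <;> rw [s_mul_s_mul] at h'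
  · exact hu.trans h'
  · exact h'

lemma bruhatLE.s_mul {n i : ℕ} {u y : Perm ℕ} (h : bruhatLE n u y)
    (hy : bruhatLE n y (s i * y)) : bruhatLE n (s i * u) (s i * y) :=
  h.s_mul_or.elim id fun h' => h'.1.trans hy

theorem AscendsOn.induction {n : ℕ} {J : Finset ℕ} {motive : Perm ℕ → Prop} (one : motive 1)
    (s_mul : ∀ i ∈ Icc 1 n, ∀ w ∈ symGroup n, AscendsOn J w → AscendsOn J (s i * w) →
      w⁻¹ i < w⁻¹ (i + 1) → motive w → motive (s i * w))
    {w : Perm ℕ} (hw : w ∈ symGroup n) (hasc : AscendsOn J w) : motive w := by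
  induction h : len n w using Nat.strong_induction_on generalizing w with
  | _ N ih =>
    by_cases h1 : w = 1
    · exact h1 ▸ one
    obtain ⟨i, hi, hdesc⟩ := exists_descent (inv_mem hw) (inv_ne_one.2 h1)
    have hw' : s i * w ∈ symGroup n := mul_mem (s_mem_symGroup hi) hw
    have hasc' := hasc.s_mul hdesc
    have hup : (s i * w)⁻¹ i < (s i * w)⁻¹ (i + 1) := by simpa [s] using hdesc
    have hlen : len n (s i * w) < N :=
      h ▸ by simpa [s_mul_s_mul] using len_lt_len_s_mul hw' hi hup
    have := s_mul i hi _ hw' hasc' (by rwa [s_mul_s_mul]) hup (ih _ hlen hw' hasc' rfl)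
    rwa [s_mul_s_mul] at this

lemma bruhatLE_s_mul_mul_of_ascendsOn {n i : ℕ} {J : Finset ℕ} (hJ : J ⊆ Icc 1 n)
    (hi : i ∈ Icc 1 n) {w x : Perm ℕ} (hw : w ∈ symGroup n) (hasc : AscendsOn J w)
    (hasc' : AscendsOn J (s i * w)) (hup : w⁻¹ i < w⁻¹ (i + 1)) (hx : x ∈ parab J) :
    bruhatLE n (w * x) (s i * (w * x)) := by
  refine bruhatLE_s_mul (mul_mem hw (parab_le_symGroup hJ hx)) hi ?_
  rw [← mul_assoc, len_mul_of_ascendsOn hJ hasc' hx, len_mul_of_ascendsOn hJ hasc hx]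
  have := len_lt_len_s_mul hw hi hup
  omega

lemma bruhatLE_mul_left_of_ascendsOn {n : ℕ} {J : Finset ℕ} (hJ : J ⊆ Icc 1 n) {v w : Perm ℕ}
    (hv : v ∈ parab J) (hw : w ∈ symGroup n) (hasc : AscendsOn J w) :
    bruhatLE n v (w * v) := by
  refine AscendsOn.induction (motive := fun w => bruhatLE n v (w * v))
    (by rw [one_mul]; exact .refl) (fun i hi w hw hasc hasc' hup ih => ?_) hw hasc
  rw [mul_assoc]
  exact ih.trans (bruhatLE_s_mul_mul_of_ascendsOn hJ hi hw hasc hasc' hup hv)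

lemma mem_of_s_mul_mem_parab {L : Finset ℕ} {i : ℕ} {w : Perm ℕ} (h : s i * w ∈ parab L)
    (hup : w⁻¹ i < w⁻¹ (i + 1)) : i ∈ L := by
  by_contra hi
  have := apply_lt_apply_succ_of_mem_parab (inv_mem h) hi
  rw [mul_inv_rev, Perm.mul_apply, Perm.mul_apply, s, swap_inv, swap_apply_left,
    swap_apply_right] at this
  exact this.not_gt hup

lemma mul_bruhatLE_mul_of_bruhatLE {n : ℕ} {J K L : Finset ℕ} (hJ : J ⊆ Icc 1 n)
    (hK : K ⊆ Icc 1 n) (hL : L ⊆ Icc 1 n) (hKL : Disjoint L K) {v w u : Perm ℕ} (hv : v ∈ parab K)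
    (hw : w ∈ parab L) (hasc : AscendsOn J w) (hu : u ∈ parab J) (hvu : bruhatLE n v (w * u)) :
    bruhatLE n (w * v) (w * u) := by
  have hvS := parab_le_symGroup hK hv
  refine AscendsOn.induction (motive := fun w => w ∈ parab L → bruhatLE n v (w * u) →
    bruhatLE n (w * v) (w * u)) (fun _ h => by simpa using h) ?_ (parab_le_symGroup hL hw) hasc
    hw hvu
  intro i hi w hwS hasc hasc' hup ih hwL hvu
  have hiL := mem_of_s_mul_mem_parab hwL hup
  have hv_up : bruhatLE n v (s i * v) := bruhatLE_s_mul hvS hi <| len_lt_len_s_mul hvS hi <|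
    apply_lt_apply_succ_of_mem_parab (inv_mem hv) (disjoint_left.1 hKL hiL)
  rw [mul_assoc] at hvu
  rw [mul_assoc, mul_assoc]
  refine (ih ?_ (bruhatLE_of_bruhatLE_s_mul hv_up hvu)).s_mul
    (bruhatLE_s_mul_mul_of_ascendsOn hJ hi hwS hasc hasc' hup hu)
  simpa [s_mul_s_mul] using mul_mem (s_mem_parab hiL) hwL

theorem up_eq_mul_general (n : ℕ) (K : Finset ℕ) (hK : K ⊆ Finset.Icc 1 n)
    (m : ℕ) (hmK : m ∉ K)
    (w : Equiv.Perm ℕ)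
    (hw : IsMinRep n ((Finset.Icc 1 n).erase m) w)
    (hwK : w ∈ parab ((Finset.Icc 1 n) \ K))
    (v : Equiv.Perm ℕ) (hv : v ∈ parab K) :
    ((∃ u ∈ parab ((Finset.Icc 1 n).erase m), w * v = w * u) ∧ bruhatLE n v (w * v)) ∧
      ∀ y, (∃ u ∈ parab ((Finset.Icc 1 n).erase m), y = w * u) → bruhatLE n v y →
        bruhatLE n (w * v) y := by
  have hJ : (Icc 1 n).erase m ⊆ Icc 1 n := erase_subset m _
  have hKJ : K ⊆ (Icc 1 n).erase m := fun k hk => mem_erase.2 ⟨fun h => hmK (h ▸ hk), hK hk⟩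
  have hasc := hw.ascendsOn hJ
  refine ⟨⟨⟨v, parab_mono hKJ hv, rfl⟩, bruhatLE_mul_left_of_ascendsOn hJ (parab_mono hKJ hv)
    (parab_le_symGroup sdiff_subset hwK) hasc⟩, ?_⟩
  rintro y ⟨u, hu, rfl⟩ hvy
  exact mul_bruhatLE_mul_of_bruhatLE hJ hK sdiff_subset sdiff_disjoint hv hwK hasc hu hvy

/-- Let `W = S_{n+1}`, `K ⊆ I = {1,…,n}`, `m ∈ I ∖ K`, `w ∈ W^{I∖{m}} ∩ W_{I∖K}`
and `v ∈ W_K`.  Then `wv` is the Bruhat-minimum of `{ y ∈ w W_{I∖{m}} ∣ y ≥ v }`. -/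
theorem up_eq_mul (n : ℕ) (K : Finset ℕ) (hK : K ⊆ Finset.Icc 1 n)
    (m : ℕ) (hm : m ∈ Finset.Icc 1 n) (hmK : m ∉ K)
    (w : Equiv.Perm ℕ)
    (hw : IsMinRep n ((Finset.Icc 1 n).erase m) w)
    (hwK : w ∈ parab ((Finset.Icc 1 n) \ K))
    (v : Equiv.Perm ℕ) (hv : v ∈ parab K) :
    ((∃ u ∈ parab ((Finset.Icc 1 n).erase m), w * v = w * u) ∧ bruhatLE n v (w * v)) ∧
      ∀ y, (∃ u ∈ parab ((Finset.Icc 1 n).erase m), y = w * u) → bruhatLE n v y →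
        bruhatLE n (w * v) y :=
  up_eq_mul_general n K hK m hmK w hw hwK v hv

end Stmt1
end

section
/- Let $W = S_{n+1}$, $w = s_1 s_2 \cdots s_k$ for some $0 \le k \le n$, and for $k+1 \le p \le n$ let $\beta_p := \alpha_1 + \cdots + \alpha_p = \varepsilon_1 - \varepsilon_{p+1}$. Then $s_{\beta_p} w = s_1 s_2 \cdots s_{p-1} s_p s_{p-1} \cdots s_{k+1}$; moreover $\ell(s_{\beta_p} w) > \ell(w) + 1$ for $k+1 < p \le n$, and $\ell(s_{\beta_{k+1}} w) = \ell(w) + 1$. -/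
namespace Stmt5

/-- The simple transposition `s_i = (i, i+1)` of `S_{n+1}`, realized inside `Perm ℕ`
(our permutations move only the letters `1, …, n+1`). -/
def s (i : ℕ) : Equiv.Perm ℕ := Equiv.swap i (i + 1)

/-- The product `s_{l_1} s_{l_2} ⋯ s_{l_r}` of the simple reflections listed in `l`. -/
def word (l : List ℕ) : Equiv.Perm ℕ := (l.map s).prod

/-- The length (number of inversions among the letters `1, …, n+1`, counted over
`{0, 1, …, n+1}`; the letter `0` is fixed and contributes nothing). -/
def len (n : ℕ) (w : Equiv.Perm ℕ) : ℕ :=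
  ((Finset.range (n + 2) ×ˢ Finset.range (n + 2)).filter
    (fun q => q.1 < q.2 ∧ w q.2 < w q.1)).card

/-! `w = s_1 ⋯ s_k` is the cycle `1 ↦ 2 ↦ ⋯ ↦ k+1 ↦ 1`, whose inversions are the `k` pairs
`(i, k+1)`. Hence `s_{β_p} w` sends `j ↦ j+1` for `j ≤ k`, `k+1 ↦ p+1` and `p+1 ↦ 1`; its
inversions are the `p` pairs `(i, p+1)` together with the `p-k-1` pairs `(k+1, j)`, `k+1 < j ≤ p`,
so `ℓ(s_{β_p} w) = ℓ(w) + 1 + 2 (p-k-1)`. -/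

lemma word_append (l₁ l₂ : List ℕ) : word (l₁ ++ l₂) = word l₁ * word l₂ := by
  simp [word]

lemma word_singleton_apply (a j : ℕ) :
    word [a] j = if j = a then a + 1 else if j = a + 1 then a else j := by
  simp [word, s, Equiv.swap_apply_def]

lemma word_reverse (l : List ℕ) : word l.reverse = (word l)⁻¹ := by
  induction l with
  | nil => simp [word]
  | cons a l ih =>
    rw [List.reverse_cons, word_append, ih]
    simp [word, s]

lemma word_range'_apply (a m j : ℕ) :
    word (List.range' a m) j = if a ≤ j ∧ j < a + m then j + 1 else if j = a + m then a else j := by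
  induction m generalizing j with
  | zero =>
    simp only [List.range'_zero, word, List.map_nil, List.prod_nil, Equiv.Perm.one_apply]
    split_ifs <;> omega
  | succ m ih =>
    rw [List.range'_concat, word_append, Equiv.Perm.mul_apply, ih, word_singleton_apply]
    split_ifs <;> omega

lemma swap_one_mul_word_range'_apply {k p : ℕ} (hkp : k + 1 ≤ p) (j : ℕ) :
    (Equiv.swap 1 (p + 1) * word (List.range' 1 k)) j =
      if 1 ≤ j ∧ j ≤ k then j + 1 else if j = k + 1 then p + 1 else if j = p + 1 then 1 else j := by
  rw [Equiv.Perm.mul_apply, word_range'_apply, Equiv.swap_apply_def]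
  split_ifs <;> omega

lemma swap_one_mul_word_range' {k p : ℕ} (hkp : k + 1 ≤ p) :
    Equiv.swap 1 (p + 1) * word (List.range' 1 k) =
      word (List.range' 1 p ++ (List.range' (k + 1) (p - 1 - k)).reverse) := by
  rw [word_append, word_reverse, eq_mul_inv_iff_mul_eq]
  ext j
  rw [Equiv.Perm.mul_apply, swap_one_mul_word_range'_apply hkp, word_range'_apply,
    word_range'_apply]
  split_ifs <;> omega

def inversions (n : ℕ) (w : Equiv.Perm ℕ) : Finset (ℕ × ℕ) :=
  (Finset.range (n + 2) ×ˢ Finset.range (n + 2)).filter (fun q => q.1 < q.2 ∧ w q.2 < w q.1)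

lemma len_eq_card_inversions (n : ℕ) (w : Equiv.Perm ℕ) : len n w = (inversions n w).card := rfl

lemma inversions_word_range' {n a m : ℕ} (h : a + m ≤ n + 1) :
    inversions n (word (List.range' a m)) = Finset.Ico a (a + m) ×ˢ {a + m} := by
  ext ⟨i, j⟩
  simp only [inversions, Finset.mem_filter, Finset.mem_product, Finset.mem_range,
    Finset.mem_Ico, Finset.mem_singleton, word_range'_apply]
  split_ifs <;> omega

lemma len_word_range' {n a m : ℕ} (h : a + m ≤ n + 1) : len n (word (List.range' a m)) = m := by
  simp [len_eq_card_inversions, inversions_word_range' h]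

lemma inversions_swap_one_mul_word_range' {n k p : ℕ} (hkp : k + 1 ≤ p) (hpn : p ≤ n) :
    inversions n (Equiv.swap 1 (p + 1) * word (List.range' 1 k)) =
      Finset.Ico 1 (p + 1) ×ˢ {p + 1} ∪ {k + 1} ×ˢ Finset.Ico (k + 2) (p + 1) := by
  ext ⟨i, j⟩
  simp only [inversions, Finset.mem_filter, Finset.mem_product, Finset.mem_range, Finset.mem_union,
    Finset.mem_Ico, Finset.mem_singleton, swap_one_mul_word_range'_apply hkp]
  split_ifs <;> omega

lemma len_swap_one_mul_word_range' {n k p : ℕ} (hkp : k + 1 ≤ p) (hpn : p ≤ n) :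
    len n (Equiv.swap 1 (p + 1) * word (List.range' 1 k)) = p + (p - (k + 1)) := by
  have hdisj : Disjoint (Finset.Ico 1 (p + 1) ×ˢ {p + 1}) ({k + 1} ×ˢ Finset.Ico (k + 2) (p + 1)) :=
    Finset.disjoint_product.2 (Or.inr (by simp))
  rw [len_eq_card_inversions, inversions_swap_one_mul_word_range' hkp hpn,
    Finset.card_union_of_disjoint hdisj]
  simp

theorem refl_mul_word_general (n k : ℕ) :
    (∀ p, k + 1 ≤ p → p ≤ n →
        Equiv.swap 1 (p + 1) * word (List.range' 1 k) =
          word (List.range' 1 p ++ (List.range' (k + 1) (p - 1 - k)).reverse)) ∧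
    (∀ p, k + 1 < p → p ≤ n →
        len n (word (List.range' 1 k)) + 1 <
          len n (Equiv.swap 1 (p + 1) * word (List.range' 1 k))) ∧
    (k + 1 ≤ n →
        len n (Equiv.swap 1 (k + 2) * word (List.range' 1 k)) =
          len n (word (List.range' 1 k)) + 1) := by
  refine ⟨fun p hkp _ => swap_one_mul_word_range' hkp, fun p hkp hpn => ?_, fun hkn => ?_⟩
  · rw [len_word_range' (by omega), len_swap_one_mul_word_range' hkp.le hpn]
    omega
  · rw [len_word_range' (by omega), len_swap_one_mul_word_range' (p := k + 1) le_rfl hkn]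
    omega

/-- Let `w = s_1 s_2 ⋯ s_k` in `S_{n+1}` (`0 ≤ k ≤ n`) and, for `k+1 ≤ p ≤ n`, let
`s_{β_p}` be the reflection in the root `β_p = ε_1 - ε_{p+1}`, i.e. the transposition
`(1, p+1)`.  Then `s_{β_p} w = s_1 s_2 ⋯ s_{p-1} s_p s_{p-1} ⋯ s_{k+1}`; moreover
`ℓ(s_{β_p} w) > ℓ(w) + 1` for `k+1 < p ≤ n`, and `ℓ(s_{β_{k+1}} w) = ℓ(w) + 1`. -/
theorem refl_mul_word (n k : ℕ) (hk : k ≤ n) :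
    (∀ p, k + 1 ≤ p → p ≤ n →
        Equiv.swap 1 (p + 1) * word (List.range' 1 k) =
          word (List.range' 1 p ++ (List.range' (k + 1) (p - 1 - k)).reverse)) ∧
    (∀ p, k + 1 < p → p ≤ n →
        len n (word (List.range' 1 k)) + 1 <
          len n (Equiv.swap 1 (p + 1) * word (List.range' 1 k))) ∧
    (k + 1 ≤ n →
        len n (Equiv.swap 1 (k + 2) * word (List.range' 1 k)) =
          len n (word (List.range' 1 k)) + 1) :=
  refl_mul_word_general n k

end Stmt5
end

section
/- Let $w \in S_n$ be a permutation with $\ell(w) < \ell(w_\circ)$ that is dominant (i.e. its code is weakly decreasing). Let $i_0 := \min\{1 \le i \le n-1 \mid c_i(w) = c_{i+1}(w)\}$ (this set is nonempty) and $v := w s_{i_0}$. Then $v$ is dominant, $\ell(v) = \ell(w) + 1$, and the code of $v$ satisfies $c_i(v) = c_i(w)$ for $i \ne i_0$ and $c_{i_0}(v) = c_{i_0}(w) + 1$. -/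
/-!
Right multiplication by `s k` at an ascent `w k < w (k+1)` turns the code
`(…, c_k, c_{k+1}, …)` into `(…, c_{k+1} + 1, c_k, …)` and leaves the other entries alone.
A plateau `c_k = c_{k+1}` is always an ascent, so there only `c_k` grows by one; at the
first plateau the code is strictly decreasing before `k`, so it stays weakly decreasing.
A plateau exists since `c_i ≤ n - i`, so a strictly decreasing code is `(n-1, …, 1, 0)`,
whose sum is `ℓ(w_∘)`.
-/

namespace Stmt10

/-- The simple transposition `s_i = (i, i+1)`. -/
def s (i : ℕ) : Equiv.Perm ℕ := Equiv.swap i (i + 1)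

/-- The code of `w ∈ S_n` (permutations of `{1,…,n}` inside `Perm ℕ`):
`c_i(w) = |{ j : i < j ≤ n, w(j) < w(i) }|`. -/
def code (n : ℕ) (w : Equiv.Perm ℕ) (i : ℕ) : ℕ :=
  ((Finset.Ioc i n).filter (fun j => w j < w i)).card

/-- The number of inversions of `w` among the letters `1, …, n`. -/
def len (n : ℕ) (w : Equiv.Perm ℕ) : ℕ :=
  ((Finset.Icc 1 n ×ˢ Finset.Icc 1 n).filter
    (fun q => q.1 < q.2 ∧ w q.2 < w q.1)).card

/-- `w` is dominant iff its code is weakly decreasing. -/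
def Dominant (n : ℕ) (w : Equiv.Perm ℕ) : Prop :=
  ∀ i, 1 ≤ i → i < n → code n w (i + 1) ≤ code n w i

open Finset

section Code

variable {n : ℕ} {w : Equiv.Perm ℕ}

lemma code_le_sub (i : ℕ) : code n w i ≤ n - i :=
  (card_filter_le _ _).trans (Nat.card_Ioc i n).le

lemma len_eq_sum_code : len n w = ∑ i ∈ Icc 1 n, code n w i := by
  rw [len, card_filter, sum_product]
  refine sum_congr rfl fun a ha => ?_
  rw [← card_filter, code]
  congr 1
  ext b
  simp only [mem_filter, mem_Icc, mem_Ioc] at ha ⊢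
  omega

lemma code_eq_ite_add {i : ℕ} (hi : i + 1 ≤ n) :
    code n w i = (if w (i + 1) < w i then 1 else 0) + #{j ∈ Ioc (i + 1) n | w j < w i} := by
  rw [code, ← Icc_add_one_left_eq_Ioc, ← Ioc_insert_left hi, filter_insert]
  split_ifs
  · rw [card_insert_of_notMem (by simp), add_comm]
  · rw [zero_add]

lemma code_succ_lt_of_lt {i : ℕ} (hi : i + 1 ≤ n) (hdesc : w (i + 1) < w i) :
    code n w (i + 1) < code n w i := by
  rw [code_eq_ite_add hi, if_pos hdesc, Nat.lt_one_add_iff]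
  exact card_le_card fun j hj => by
    simp only [mem_filter] at hj ⊢
    exact ⟨hj.1, hj.2.trans hdesc⟩

lemma lt_of_code_eq_code_succ {i : ℕ} (hi : i + 1 ≤ n) (heq : code n w i = code n w (i + 1)) :
    w i < w (i + 1) := by
  refine lt_of_le_of_ne (not_lt.1 fun hdesc => ?_) fun h => by simpa using w.injective h
  exact (code_succ_lt_of_lt hi hdesc).ne' heq

lemma sub_le_code_of_strictAnti
    (hstrict : ∀ i, 1 ≤ i → i < n → code n w (i + 1) < code n w i) {i : ℕ} (hi : 1 ≤ i) :
    n - i ≤ code n w i := by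
  induction h : n - i generalizing i with
  | zero => exact Nat.zero_le _
  | succ d ih =>
    have := ih (i := i + 1) (by omega) (by omega)
    have := hstrict i hi (by omega)
    omega

lemma len_eq_of_code_strictAnti
    (hstrict : ∀ i, 1 ≤ i → i < n → code n w (i + 1) < code n w i) :
    len n w = n * (n - 1) / 2 := by
  have hcode : ∀ i ∈ Icc 1 n, code n w i = n - i := fun i hi =>
    (code_le_sub i).antisymm (sub_le_code_of_strictAnti hstrict (mem_Icc.1 hi).1)
  rw [len_eq_sum_code, sum_congr rfl hcode, ← Ico_add_one_right_eq_Icc, sum_Ico_eq_sum_range,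
    ← sum_range_id, ← sum_range_reflect]
  exact sum_congr rfl fun j hj => by rw [mem_range] at hj; omega

lemma exists_code_eq_code_succ (hdom : Dominant n w) (hlen : len n w < n * (n - 1) / 2) :
    ∃ i, 1 ≤ i ∧ i < n ∧ code n w i = code n w (i + 1) := by
  by_contra! hne
  exact hlen.ne (len_eq_of_code_strictAnti fun i hi hin =>
    lt_of_le_of_ne (hdom i hi hin) (hne i hi hin).symm)

end Code

section MulS

variable {n k : ℕ} {w : Equiv.Perm ℕ}

lemma mul_s_apply_of_ne {j : ℕ} (hk : j ≠ k) (hk' : j ≠ k + 1) : (w * s k) j = w j := by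
  rw [Equiv.Perm.mul_apply, s, Equiv.swap_apply_of_ne_of_ne hk hk']

lemma code_mul_s_of_ne (hkn : k + 1 ≤ n) {i : ℕ} (hk : i ≠ k) (hk' : i ≠ k + 1) :
    code n (w * s k) i = code n w i := by
  -- `s k` permutes `Ioc i n` unless `i = k`
  refine card_equiv (s k) fun j => ?_
  simp only [mem_filter, mem_Ioc, Equiv.Perm.mul_apply, mul_s_apply_of_ne hk hk']
  rcases eq_or_ne j k with rfl | hjk
  · simp only [s, Equiv.swap_apply_left]; omega
  rcases eq_or_ne j (k + 1) with rfl | hjk'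
  · simp only [s, Equiv.swap_apply_right]; omega
  · rw [s, Equiv.swap_apply_of_ne_of_ne hjk hjk']

lemma filter_mul_s_eq (u : ℕ) :
    {j ∈ Ioc (k + 1) n | (w * s k) j < u} = {j ∈ Ioc (k + 1) n | w j < u} :=
  filter_congr fun j hj => by
    rw [mem_Ioc] at hj
    rw [mul_s_apply_of_ne (by omega) (by omega)]

lemma code_mul_s_self (hkn : k + 1 ≤ n) (hasc : w k < w (k + 1)) :
    code n (w * s k) k = code n w (k + 1) + 1 := by
  have hk : (w * s k) k = w (k + 1) := by simp [s]
  have hk' : (w * s k) (k + 1) = w k := by simp [s]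
  rw [code_eq_ite_add hkn, hk, hk', if_pos hasc, filter_mul_s_eq, add_comm, code]

lemma code_mul_s_succ (hkn : k + 1 ≤ n) (hasc : w k < w (k + 1)) :
    code n (w * s k) (k + 1) = code n w k := by
  have hk' : (w * s k) (k + 1) = w k := by simp [s]
  rw [code_eq_ite_add hkn, if_neg hasc.not_gt, zero_add, code, hk', filter_mul_s_eq]

lemma code_mul_s_of_code_eq (hkn : k + 1 ≤ n) (heq : code n w k = code n w (k + 1)) (i : ℕ) :
    code n (w * s k) i = code n w i + if i = k then 1 else 0 := by
  have hasc := lt_of_code_eq_code_succ hkn heq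
  split_ifs with hik
  · rw [hik, code_mul_s_self hkn hasc, heq]
  rcases eq_or_ne i (k + 1) with rfl | hik'
  · rw [code_mul_s_succ hkn hasc, heq, add_zero]
  · rw [code_mul_s_of_ne hkn hik hik', add_zero]

lemma len_mul_s_of_code_eq (hk : 1 ≤ k) (hkn : k + 1 ≤ n)
    (heq : code n w k = code n w (k + 1)) : len n (w * s k) = len n w + 1 := by
  rw [len_eq_sum_code, len_eq_sum_code, sum_congr rfl fun i _ => code_mul_s_of_code_eq hkn heq i,
    sum_add_distrib, sum_ite_eq', if_pos (mem_Icc.2 ⟨hk, by omega⟩)]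

lemma dominant_mul_s_of_code_eq (hdom : Dominant n w) (hkn : k + 1 ≤ n)
    (heq : code n w k = code n w (k + 1))
    (hmin : ∀ i, 1 ≤ i → i < k → code n w i ≠ code n w (i + 1)) :
    Dominant n (w * s k) := by
  intro i hi hin
  have hle := hdom i hi hin
  rw [code_mul_s_of_code_eq hkn heq, code_mul_s_of_code_eq hkn heq]
  by_cases hik : i + 1 = k
  · have := hmin i hi (by omega)
    rw [if_pos hik, if_neg (by omega)]
    omega
  · split_ifs <;> omega

end MulS

theorem dominant_ascent_general (n : ℕ) (w : Equiv.Perm ℕ)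
    (hdom : Dominant n w)
    (hlen : len n w < n * (n - 1) / 2) :
    {i : ℕ | 1 ≤ i ∧ i < n ∧ code n w i = code n w (i + 1)}.Nonempty ∧
    ∀ i₀, i₀ = sInf {i : ℕ | 1 ≤ i ∧ i < n ∧ code n w i = code n w (i + 1)} →
      Dominant n (w * s i₀) ∧
      len n (w * s i₀) = len n w + 1 ∧
      (∀ i, i ≠ i₀ → code n (w * s i₀) i = code n w i) ∧
      code n (w * s i₀) i₀ = code n w i₀ + 1 := by
  have hne := exists_code_eq_code_succ hdom hlen
  refine ⟨hne, fun i₀ hi₀ => ?_⟩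
  obtain ⟨hi₀1, hi₀n, heq⟩ : 1 ≤ i₀ ∧ i₀ < n ∧ code n w i₀ = code n w (i₀ + 1) :=
    hi₀ ▸ Nat.sInf_mem hne
  have hmin : ∀ i, 1 ≤ i → i < i₀ → code n w i ≠ code n w (i + 1) := fun i hi hii₀ heqi =>
    Nat.notMem_of_lt_sInf (hi₀ ▸ hii₀) (show 1 ≤ i ∧ i < n ∧ _ from ⟨hi, by omega, heqi⟩)
  have hcode := code_mul_s_of_code_eq hi₀n heq
  refine ⟨dominant_mul_s_of_code_eq hdom hi₀n heq hmin, len_mul_s_of_code_eq hi₀1 hi₀n heq,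
    fun i hi => ?_, by simpa using hcode i₀⟩
  simpa [hi] using hcode i

/-- Let `w ∈ S_n` be dominant with `ℓ(w) < ℓ(w_∘) = n(n-1)/2`.  Then the set
`{1 ≤ i ≤ n-1 ∣ c_i(w) = c_{i+1}(w)}` is nonempty; letting `i₀` be its minimum and
`v := w s_{i₀}`, the permutation `v` is dominant, `ℓ(v) = ℓ(w) + 1`, and
`c_i(v) = c_i(w)` for `i ≠ i₀` while `c_{i₀}(v) = c_{i₀}(w) + 1`. -/
theorem dominant_ascent (n : ℕ) (w : Equiv.Perm ℕ)
    (hsupp : ∀ j, j = 0 ∨ n < j → w j = j)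
    (hdom : Dominant n w)
    (hlen : len n w < n * (n - 1) / 2) :
    {i : ℕ | 1 ≤ i ∧ i < n ∧ code n w i = code n w (i + 1)}.Nonempty ∧
    ∀ i₀, i₀ = sInf {i : ℕ | 1 ≤ i ∧ i < n ∧ code n w i = code n w (i + 1)} →
      Dominant n (w * s i₀) ∧
      len n (w * s i₀) = len n w + 1 ∧
      (∀ i, i ≠ i₀ → code n (w * s i₀) i = code n w i) ∧
      code n (w * s i₀) i₀ = code n w i₀ + 1 :=
  dominant_ascent_general n w hdom hlen

end Stmt10
end

section
/- In the ring $R = \mathbb{Z}[x_1,\ldots,x_n, (1-y_1)^{\pm 1}, \ldots, (1-y_n)^{\pm 1}]$, let $I_n$ be the ideal generated by $e_i(1-x_1,\ldots,1-x_n) - e_i((1-y_1)^{-1},\ldots,(1-y_n)^{-1})$ for $i = 1, \ldots, n$, where $e_i$ is the $i$-th elementary symmetric polynomial. Then the element $\eta^n(x_1) := \prod_{j=1}^{n}(x_1 + y_j - x_1 y_j)$ belongs to $I_n$. -/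
/-!
Since `(1 - y_j) u_j = 1`, each factor `x_1 + y_j - x_1 y_j` equals `(1 - y_j)(u_j - (1 - x_1))`,
so `η^n(x_1)` is a unit multiple of `∏_j (u_j - (1 - x_1))`. Expanding in the elementary
symmetric functions, this product agrees modulo `I_n` with `∏_j ((1 - x_j) - (1 - x_1))`,
which vanishes because of its factor `j = 1`.
-/

namespace Stmt11

/-- The elementary symmetric function `e_k(z_1, …, z_n)` of a family of ring elements. -/
def esym {R : Type*} [CommRing R] {n : ℕ} (k : ℕ) (z : Fin n → R) : R :=
  ∑ J ∈ (Finset.univ : Finset (Fin n)).powersetCard k, ∏ j ∈ J, z j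

section

variable {R : Type*} [CommRing R] {n : ℕ}

lemma esym_zero (z : Fin n → R) : esym 0 z = 1 := by
  simp [esym]

lemma prod_add_eq_sum_esym (z : Fin n → R) (t : R) :
    ∏ j, (z j + t) = ∑ k ∈ Finset.range (n + 1), esym k z * t ^ (n - k) := by
  rw [Finset.prod_add, Finset.powerset_card_disjiUnion]
  erw [Finset.sum_disjiUnion]
  rw [Finset.card_univ, Fintype.card_fin]
  refine Finset.sum_congr rfl fun k _ => ?_
  rw [esym, Finset.sum_mul]
  refine Finset.sum_congr rfl fun S hS => ?_
  rw [Finset.prod_const, Finset.card_sdiff_of_subset (Finset.subset_univ S), Finset.card_univ,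
    Fintype.card_fin, (Finset.mem_powersetCard.mp hS).2]

lemma prod_add_sub_prod_add_mem_span_esym_sub (z w : Fin n → R) (t : R) :
    ∏ j, (z j + t) - ∏ j, (w j + t) ∈
      Ideal.span (Set.range fun i : Fin n => esym ((i : ℕ) + 1) z - esym ((i : ℕ) + 1) w) := by
  rw [prod_add_eq_sum_esym, prod_add_eq_sum_esym, ← Finset.sum_sub_distrib,
    Finset.sum_range_succ', esym_zero, esym_zero, sub_self, add_zero, Finset.sum_range]
  refine Ideal.sum_mem _ fun i _ => ?_
  rw [← sub_mul]
  exact Ideal.mul_mem_right _ _ (Ideal.subset_span ⟨i, rfl⟩)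

end

/-- In the ring `R = ℤ[x_1,…,x_n,(1-y_1)^{±1},…,(1-y_n)^{±1}]` — formalized as a
commutative ring containing elements `x i`, `y i` such that each `1 - y i` is invertible
with inverse `u i` — let `I_n` be the ideal generated by
`e_i(1-x_1,…,1-x_n) - e_i((1-y_1)^{-1},…,(1-y_n)^{-1})`, `i = 1, …, n`.
Then `η^n(x_1) = ∏_{j=1}^n (x_1 + y_j - x_1 y_j)` belongs to `I_n`. -/
theorem eta_mem_ideal {R : Type*} [CommRing R] {n : ℕ} (hn : 1 ≤ n)
    (x y u : Fin n → R) (hu : ∀ j, (1 - y j) * u j = 1) :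
    (∏ j : Fin n, (x ⟨0, hn⟩ + y j - x ⟨0, hn⟩ * y j)) ∈
      Ideal.span (Set.range fun i : Fin n =>
        esym ((i : ℕ) + 1) (fun j => 1 - x j) - esym ((i : ℕ) + 1) u) := by
  set x₁ := x ⟨0, hn⟩
  have hfactor : ∏ j, (x₁ + y j - x₁ * y j) = (∏ j, (1 - y j)) * ∏ j, (u j + (x₁ - 1)) := by
    rw [← Finset.prod_mul_distrib]
    exact Finset.prod_congr rfl fun j _ => by linear_combination -hu j
  have hvanish : ∏ j, ((1 - x j) + (x₁ - 1)) = 0 :=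
    Finset.prod_eq_zero (Finset.mem_univ ⟨0, hn⟩) (by ring)
  have hdiff := prod_add_sub_prod_add_mem_span_esym_sub (fun j => 1 - x j) u (x₁ - 1)
  rw [hvanish, zero_sub, neg_mem_iff] at hdiff
  rw [hfactor]
  exact Ideal.mul_mem_left _ _ hdiff

end Stmt11
end

section
/- Let $\mathfrak{g}$ be a finite-dimensional simple Lie algebra with highest root $\theta$ and fundamental weights $\varpi_i$. If $\beta$ is a quantum root (i.e., $\ell(s_\beta) = 2\langle\rho,\beta^\vee\rangle - 1$), then $\theta^\vee - \beta^\vee$ is a nonnegative integer combination of simple coroots. -/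
/-!
Averaging the dot product over the finite monoid of linear maps preserving `Δ⁺ ∪ -Δ⁺` gives a
positive definite form `B` invariant under all reflections, and in it
`β^∨ = 2β / B(β, β)`; coordinatewise, `β^∨ⱼ B(β, β) = βⱼ B(αⱼ, αⱼ)`. If `β` is at least as long
as `θ`, this and `β ≤ θ` give `β^∨ ≤ θ^∨`. Otherwise irreducibility, read off from `θ` having
full support, yields a root `γ` as long as `θ` with `B(γ, β) > 0`. Then `⟨γ, β^∨⟩ ≥ 2`, which for
a quantum root forces `s_β γ ∈ Δ⁺`, and `(s_β γ)^∨ = γ^∨ - ⟨β, γ^∨⟩ β^∨ ≥ 0` gives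
`β^∨ ≤ γ^∨ ≤ θ^∨`.
-/

namespace Stmt13

variable {ι : Type*} [Fintype ι] [DecidableEq ι]

/-- The pairing `⟨v, c⟩ = ∑_{i,j} v_i c_j ⟨α_i, α_j^∨⟩`, where `v` is written in
simple-root coordinates, `c` in simple-coroot coordinates, and
`C i j = ⟨α_i, α_j^∨⟩` is (the transpose of) the Cartan matrix. -/
def pairing (C : ι → ι → ℤ) (v c : ι → ℤ) : ℤ :=
  ∑ i, ∑ j, v i * c j * C i j

/-- The reflection `s_β v = v - ⟨v, β^∨⟩ β`. -/
def refl (C : ι → ι → ℤ) (coroot : (ι → ℤ) → (ι → ℤ)) (β v : ι → ℤ) : ι → ℤ :=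
  v - pairing C v (coroot β) • β

open Finset

section Reflection

variable (C : ι → ι → ℤ) (coroot : (ι → ℤ) → (ι → ℤ))

omit [DecidableEq ι] in
lemma pairing_add_left (v w c : ι → ℤ) :
    pairing C (v + w) c = pairing C v c + pairing C w c := by
  simp only [pairing, Pi.add_apply, add_mul, sum_add_distrib]

omit [DecidableEq ι] in
lemma pairing_smul_left (n : ℤ) (v c : ι → ℤ) :
    pairing C (n • v) c = n * pairing C v c := by
  simp only [pairing, Pi.smul_apply, smul_eq_mul, mul_sum, mul_assoc]

lemma pairing_single_left (i : ι) (c : ι → ℤ) :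
    pairing C (Pi.single i 1) c = ∑ j, c j * C i j := by
  simp [pairing, Pi.single_apply]

lemma pairing_single_single (i j : ι) :
    pairing C (Pi.single i 1) (Pi.single j 1) = C i j := by
  simp [pairing_single_left, Pi.single_apply]

omit [DecidableEq ι] in
lemma refl_apply (β v : ι → ℤ) (i : ι) :
    refl C coroot β v i = v i - pairing C v (coroot β) * β i := rfl

def reflLinear (β : ι → ℤ) : Module.End ℤ (ι → ℤ) where
  toFun := refl C coroot β
  map_add' v w := by simp only [refl, pairing_add_left, add_smul]; abel
  map_smul' n v := by simp only [refl, pairing_smul_left, mul_smul, smul_sub, RingHom.id_apply]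

omit [DecidableEq ι] in
@[simp]
lemma reflLinear_apply (β v : ι → ℤ) : reflLinear C coroot β v = refl C coroot β v := rfl

omit [DecidableEq ι] in
lemma refl_neg (β v : ι → ℤ) : refl C coroot β (-v) = -refl C coroot β v :=
  (reflLinear C coroot β).map_neg v

variable {C coroot} {β : ι → ℤ} (hβ : pairing C β (coroot β) = 2)
include hβ

omit [DecidableEq ι] in
lemma refl_self : refl C coroot β β = -β := by
  rw [refl, hβ, two_smul]; abel

omit [DecidableEq ι] in
lemma pairing_refl_left (v : ι → ℤ) :
    pairing C (refl C coroot β v) (coroot β) = -pairing C v (coroot β) := by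
  rw [refl, sub_eq_add_neg, ← neg_smul, pairing_add_left, pairing_smul_left, hβ]; ring

omit [DecidableEq ι] in
lemma refl_refl (v : ι → ℤ) : refl C coroot β (refl C coroot β v) = v := by
  rw [refl, pairing_refl_left hβ, refl, neg_smul, sub_neg_eq_add, sub_add_cancel]

omit [DecidableEq ι] in
lemma reflLinear_mul_self : reflLinear C coroot β * reflLinear C coroot β = 1 :=
  LinearMap.ext (refl_refl hβ)

end Reflection

lemma exists_isSymm_pos_invariant_form {R : Type*} [CommRing R] [LinearOrder R]
    [IsStrictOrderedRing R] (D : Finset (ι → R)) (hD : ∀ i, Pi.single i 1 ∈ D) :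
    ∃ B : LinearMap.BilinForm R (ι → R), B.IsSymm ∧ (∀ x ≠ 0, 0 < B x x) ∧
      ∀ σ : Module.End R (ι → R), (∀ v ∈ D, σ v ∈ D) → σ * σ = 1 →
        ∀ x y, B (σ x) (σ y) = B x y := by
  let M : Set (Module.End R (ι → R)) := {g | ∀ v ∈ D, g v ∈ D}
  have hM : M.Finite := by
    refine Set.Finite.of_finite_image (f := fun (g : Module.End R (ι → R)) i => g (Pi.single i 1))
      ((Set.Finite.pi' fun _ => D.finite_toSet).subset ?_) fun g _ h _ hgh => ?_
    · rintro _ ⟨g, hg, rfl⟩ i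
      exact hg _ (hD i)
    · exact (Pi.basisFun R ι).ext fun i => by simpa using congrFun hgh i
  have hsq (v : ι → R) : 0 ≤ v ⬝ᵥ v := Fintype.sum_nonneg fun i => mul_self_nonneg (v i)
  refine ⟨∑ g ∈ hM.toFinset, (dotProductBilin R R).compl₁₂ g g, ⟨fun x y => ?_⟩, fun x hx => ?_, ?_⟩
  · simp [dotProduct_comm]
  · have h1 : (1 : Module.End R (ι → R)) ∈ hM.toFinset := by simp [M]
    simp only [LinearMap.BilinForm.sum_apply, LinearMap.compl₁₂_apply, dotProductBilin_apply_apply]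
    calc 0 < x ⬝ᵥ x := lt_of_le_of_ne (hsq x) (Ne.symm (by simpa using hx))
      _ ≤ _ := single_le_sum (f := fun g : Module.End R (ι → R) => g x ⬝ᵥ g x)
          (fun g _ => hsq _) h1
  · intro σ hσ hσσ x y
    simp only [LinearMap.BilinForm.sum_apply, LinearMap.compl₁₂_apply, dotProductBilin_apply_apply]
    have hmem : ∀ g ∈ hM.toFinset, g * σ ∈ hM.toFinset := fun g hg => by
      rw [Set.Finite.mem_toFinset] at hg ⊢
      exact fun v hv => hg _ (hσ v hv)
    have hcancel (g : Module.End R (ι → R)) : g * σ * σ = g := by rw [mul_assoc, hσσ, mul_one]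
    exact sum_nbij' (· * σ) (· * σ) hmem hmem (fun g _ => hcancel g) (fun g _ => hcancel g)
      fun g _ => rfl

structure IsPositiveSystem (C : ι → ι → ℤ) (coroot : (ι → ℤ) → (ι → ℤ))
    (Δp : Finset (ι → ℤ)) : Prop where
  nonneg : ∀ v ∈ Δp, ∀ i, 0 ≤ v i
  single_mem : ∀ i, (Pi.single i 1 : ι → ℤ) ∈ Δp
  pairing_coroot_self : ∀ β ∈ Δp, pairing C β (coroot β) = 2
  coroot_single : ∀ i, coroot (Pi.single i 1) = Pi.single i 1
  refl_mem_or_neg_mem : ∀ β ∈ Δp, ∀ γ ∈ Δp, refl C coroot β γ ∈ Δp ∨ -refl C coroot β γ ∈ Δp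

structure IsInvariantForm (C : ι → ι → ℤ) (coroot : (ι → ℤ) → (ι → ℤ)) (Δp : Finset (ι → ℤ))
    (B : LinearMap.BilinForm ℤ (ι → ℤ)) : Prop where
  isSymm : B.IsSymm
  pos : ∀ x ≠ 0, 0 < B x x
  apply_refl_refl : ∀ δ ∈ Δp, ∀ x y, B (refl C coroot δ x) (refl C coroot δ y) = B x y

/-- The inversion set `N(s_β)`; its cardinality is `ℓ(s_β)`. -/
def inversionSet (C : ι → ι → ℤ) (coroot : (ι → ℤ) → (ι → ℤ)) (Δp : Finset (ι → ℤ))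
    (β : ι → ℤ) : Finset (ι → ℤ) :=
  Δp.filter fun γ => refl C coroot β γ ∉ Δp

omit [DecidableEq ι] in
lemma sum_pairing_eq_sum_inversionSet {C : ι → ι → ℤ} {coroot : (ι → ℤ) → (ι → ℤ)}
    (Δp : Finset (ι → ℤ)) {β : ι → ℤ} (hβ : pairing C β (coroot β) = 2) :
    ∑ γ ∈ Δp, pairing C γ (coroot β) =
      ∑ γ ∈ inversionSet C coroot Δp β, pairing C γ (coroot β) := by
  rw [inversionSet, ← sum_filter_add_sum_filter_not Δp fun γ => refl C coroot β γ ∉ Δp,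
    add_eq_left]
  refine sum_involution (fun γ _ => refl C coroot β γ) (fun γ _ => ?_) (fun γ _ h hγ => h ?_)
    (fun γ hγ => ?_) fun γ _ => refl_refl hβ γ
  · rw [pairing_refl_left hβ, add_neg_cancel]
  · have := pairing_refl_left hβ γ
    rw [hγ] at this
    omega
  · simp only [mem_filter, not_not, refl_refl hβ] at hγ ⊢
    exact hγ.symm

omit [DecidableEq ι] in
lemma form_refl_left {C : ι → ι → ℤ} {coroot : (ι → ℤ) → (ι → ℤ)}
    (B : LinearMap.BilinForm ℤ (ι → ℤ)) (δ x y : ι → ℤ) :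
    B (refl C coroot δ x) y = B x y - pairing C x (coroot δ) * B δ y := by
  rw [refl, map_sub, map_smul, LinearMap.sub_apply, LinearMap.smul_apply, smul_eq_mul]

lemma form_eq_sum_single {R : Type*} [CommRing R] (B : LinearMap.BilinForm R (ι → R))
    (x y : ι → R) : B x y = ∑ k, y k * B x (Pi.single k 1) := by
  conv_lhs => rw [pi_eq_sum_univ' y]
  simp [map_sum]

namespace IsPositiveSystem

variable {C : ι → ι → ℤ} {coroot : (ι → ℤ) → (ι → ℤ)} {Δp : Finset (ι → ℤ)}
  (hΔ : IsPositiveSystem C coroot Δp)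
include hΔ

lemma exists_isInvariantForm : ∃ B, IsInvariantForm C coroot Δp B := by
  obtain ⟨B, hsymm, hpos, hinv⟩ := exists_isSymm_pos_invariant_form (Δp ∪ Δp.image Neg.neg)
    fun i => mem_union_left _ (hΔ.single_mem i)
  refine ⟨B, hsymm, hpos, fun δ hδ => hinv (reflLinear C coroot δ) (fun v hv => ?_)
    (reflLinear_mul_self (hΔ.pairing_coroot_self δ hδ))⟩
  simp only [mem_union, mem_image, reflLinear_apply] at hv ⊢
  rcases hv with hv | ⟨w, hw, rfl⟩
  · exact (hΔ.refl_mem_or_neg_mem δ hδ v hv).imp id fun h => ⟨_, h, neg_neg _⟩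
  · rw [refl_neg]
    exact (hΔ.refl_mem_or_neg_mem δ hδ w hw).symm.imp id fun h => ⟨_, h, rfl⟩

lemma zero_notMem : (0 : ι → ℤ) ∉ Δp := fun h => by
  simpa [pairing] using hΔ.pairing_coroot_self 0 h

lemma exists_pos_of_mem {v : ι → ℤ} (hv : v ∈ Δp) : ∃ i, 0 < v i := by
  by_contra! h
  have hv0 : v = 0 := funext fun i => le_antisymm (h i) (hΔ.nonneg v hv i)
  exact hΔ.zero_notMem (hv0 ▸ hv)

lemma refl_mem_of_pairing_nonpos {β γ : ι → ℤ} (hβ : β ∈ Δp) (hγ : γ ∈ Δp)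
    (h : pairing C γ (coroot β) ≤ 0) : refl C coroot β γ ∈ Δp := by
  refine (hΔ.refl_mem_or_neg_mem β hβ γ hγ).resolve_right fun hneg => ?_
  obtain ⟨i, hi⟩ := hΔ.exists_pos_of_mem hγ
  have := hΔ.nonneg _ hneg i
  rw [Pi.neg_apply, refl_apply] at this
  nlinarith [hΔ.nonneg β hβ i]

lemma one_le_pairing_of_mem_inversionSet {β γ : ι → ℤ} (hβ : β ∈ Δp)
    (hγ : γ ∈ inversionSet C coroot Δp β) : 1 ≤ pairing C γ (coroot β) := by
  rw [inversionSet, mem_filter] at hγ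
  by_contra! h
  exact hγ.2 (hΔ.refl_mem_of_pairing_nonpos hβ hγ.1 (by omega))

lemma mem_inversionSet_self {β : ι → ℤ} (hβ : β ∈ Δp) : β ∈ inversionSet C coroot Δp β := by
  refine mem_filter.2 ⟨hβ, fun hmem => ?_⟩
  obtain ⟨i, hi⟩ := hΔ.exists_pos_of_mem hβ
  have := hΔ.nonneg _ hmem i
  rw [refl_self (hΔ.pairing_coroot_self β hβ), Pi.neg_apply] at this
  omega

/-- For a quantum root `β`, every other `γ ∈ N(s_β)` has `⟨γ, β^∨⟩ = 1`: the inversions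
contribute `∑_{γ ∈ N(s_β)} (⟨γ, β^∨⟩ - 1) = 1`, all terms are nonnegative and `β` alone
already contributes `1`. -/
lemma refl_mem_of_two_le_pairing {β γ : ι → ℤ} (hβ : β ∈ Δp)
    (hquantum : ((inversionSet C coroot Δp β).card : ℤ) = (∑ γ ∈ Δp, pairing C γ (coroot β)) - 1)
    (hγ : γ ∈ Δp) (hne : γ ≠ β) (h2 : 2 ≤ pairing C γ (coroot β)) :
    refl C coroot β γ ∈ Δp := by
  set N := inversionSet C coroot Δp β
  have hβ2 := hΔ.pairing_coroot_self β hβ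
  have hsum : ∑ δ ∈ N, (pairing C δ (coroot β) - 1) = 1 := by
    rw [sum_sub_distrib, ← sum_pairing_eq_sum_inversionSet Δp hβ2]
    simp only [sum_const, nsmul_eq_mul, mul_one]
    omega
  rw [← add_sum_erase N _ (hΔ.mem_inversionSet_self hβ), hβ2] at hsum
  have hone := (sum_eq_zero_iff_of_nonneg fun δ hδ =>
    sub_nonneg.2 (hΔ.one_le_pairing_of_mem_inversionSet hβ (mem_of_mem_erase hδ))).1
      (by omega : ∑ δ ∈ N.erase β, (pairing C δ (coroot β) - 1) = 0)
  by_contra hs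
  have := hone γ (mem_erase.2 ⟨hne, mem_filter.2 ⟨hγ, hs⟩⟩)
  omega

variable {B : LinearMap.BilinForm ℤ (ι → ℤ)} (hB : IsInvariantForm C coroot Δp B)
include hB

lemma form_self_pos {δ : ι → ℤ} (hδ : δ ∈ Δp) : 0 < B δ δ :=
  hB.pos δ (ne_of_mem_of_not_mem hδ hΔ.zero_notMem)

lemma pairing_mul_form_self {δ : ι → ℤ} (hδ : δ ∈ Δp) (x : ι → ℤ) :
    pairing C x (coroot δ) * B δ δ = 2 * B x δ := by
  have h := hB.apply_refl_refl δ hδ x δ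
  rw [refl_self (hΔ.pairing_coroot_self δ hδ), map_neg, form_refl_left] at h
  linarith

lemma pairing_mul_form_self_comm {β γ : ι → ℤ} (hβ : β ∈ Δp) (hγ : γ ∈ Δp) :
    pairing C γ (coroot β) * B β β = pairing C β (coroot γ) * B γ γ := by
  rw [hΔ.pairing_mul_form_self hB hβ, hΔ.pairing_mul_form_self hB hγ, hB.isSymm.eq]

lemma cartan_mul_form_single (i k : ι) :
    C i k * B (Pi.single k 1) (Pi.single k 1) = 2 * B (Pi.single i 1) (Pi.single k 1) := by
  simpa [hΔ.coroot_single, pairing_single_single] using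
    hΔ.pairing_mul_form_self hB (hΔ.single_mem k) (Pi.single i 1)

/-- Up to the positive diagonal factors `B (e k) (e k) / 2`, the Cartan matrix is the Gram matrix
of `B`. -/
lemma eq_zero_of_sum_mul_cartan_eq_zero {w : ι → ℤ} (hw : ∀ i, ∑ k, w k * C i k = 0) :
    w = 0 := by
  set b : ι → ℤ := fun k => B (Pi.single k 1) (Pi.single k 1)
  have hb (k : ι) : 0 < b k := hΔ.form_self_pos hB (hΔ.single_mem k)
  -- `u k = w k / b k`, scaled by `∏ b` to stay in `ℤ`
  set u : ι → ℤ := fun k => w k * ∏ m ∈ univ.erase k, b m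
  have hu (i : ι) : B (Pi.single i 1) u = 0 := by
    have h : 2 * B (Pi.single i 1) u = (∏ m, b m) * ∑ k, w k * C i k := by
      rw [form_eq_sum_single, mul_sum, mul_sum]
      refine sum_congr rfl fun k _ => ?_
      rw [← prod_erase_mul _ _ (mem_univ k), mul_left_comm, ← hΔ.cartan_mul_form_single hB]
      ring
    rw [hw i, mul_zero] at h
    omega
  have hu0 : u = 0 := by
    by_contra hne
    have h := hB.pos u hne
    rw [form_eq_sum_single] at h
    simp [hB.isSymm.eq u, hu] at h
  funext k
  exact (mul_eq_zero.1 (congrFun hu0 k)).resolve_right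
    (prod_pos fun m _ => hb m).ne'

lemma coroot_mul_form_self {δ : ι → ℤ} (hδ : δ ∈ Δp) (j : ι) :
    coroot δ j * B δ δ = δ j * B (Pi.single j 1) (Pi.single j 1) := by
  refine sub_eq_zero.1 (congrFun (hΔ.eq_zero_of_sum_mul_cartan_eq_zero hB
    (w := fun k => coroot δ k * B δ δ - δ k * B (Pi.single k 1) (Pi.single k 1)) fun i => ?_) j)
  have h1 : ∑ k, coroot δ k * B δ δ * C i k = pairing C (Pi.single i 1) (coroot δ) * B δ δ := by
    rw [pairing_single_left, sum_mul]
    exact sum_congr rfl fun k _ => by ring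
  have h2 : ∑ k, δ k * B (Pi.single k 1) (Pi.single k 1) * C i k = 2 * B (Pi.single i 1) δ := by
    rw [form_eq_sum_single B (Pi.single i 1) δ, mul_sum]
    exact sum_congr rfl fun k _ => by linear_combination δ k * hΔ.cartan_mul_form_single hB i k
  simp only [sub_mul, sum_sub_distrib, h1, h2, hΔ.pairing_mul_form_self hB hδ, sub_self]

lemma coroot_nonneg {δ : ι → ℤ} (hδ : δ ∈ Δp) (j : ι) : 0 ≤ coroot δ j := by
  refine (mul_nonneg_iff_of_pos_right (hΔ.form_self_pos hB hδ)).1 ?_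
  rw [hΔ.coroot_mul_form_self hB hδ]
  exact mul_nonneg (hΔ.nonneg δ hδ j) (hΔ.form_self_pos hB (hΔ.single_mem j)).le

lemma coroot_le_coroot {δ ε : ι → ℤ} (hδ : δ ∈ Δp) (hε : ε ∈ Δp) (hle : ∀ i, δ i ≤ ε i)
    (hlen : B ε ε ≤ B δ δ) (j : ι) : coroot δ j ≤ coroot ε j := by
  have hδδ := hΔ.form_self_pos hB hδ
  have hεε := hΔ.form_self_pos hB hε
  refine le_of_mul_le_mul_right ?_ (mul_pos hδδ hεε)
  calc coroot δ j * (B δ δ * B ε ε)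
      = δ j * B ε ε * B (Pi.single j 1) (Pi.single j 1) := by
        linear_combination B ε ε * hΔ.coroot_mul_form_self hB hδ j
    _ ≤ ε j * B δ δ * B (Pi.single j 1) (Pi.single j 1) :=
        mul_le_mul_of_nonneg_right (mul_le_mul (hle j) hlen hεε.le (hΔ.nonneg ε hε j))
          (hΔ.form_self_pos hB (hΔ.single_mem j)).le
    _ = coroot ε j * (B δ δ * B ε ε) := by
        linear_combination -B δ δ * hΔ.coroot_mul_form_self hB hε j

lemma coroot_refl {δ γ : ι → ℤ} (hδ : δ ∈ Δp) (hγ : γ ∈ Δp) (hs : refl C coroot δ γ ∈ Δp)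
    (j : ι) :
    coroot (refl C coroot δ γ) j = coroot γ j - pairing C δ (coroot γ) * coroot δ j := by
  refine mul_right_cancel₀ (hΔ.form_self_pos hB hγ).ne' ?_
  calc coroot (refl C coroot δ γ) j * B γ γ
      = (γ j - pairing C γ (coroot δ) * δ j) * B (Pi.single j 1) (Pi.single j 1) := by
        rw [← hB.apply_refl_refl δ hδ γ γ, hΔ.coroot_mul_form_self hB hs, refl_apply]
    _ = coroot γ j * B γ γ - coroot δ j * (pairing C γ (coroot δ) * B δ δ) := by
        linear_combination pairing C γ (coroot δ) * hΔ.coroot_mul_form_self hB hδ j -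
          hΔ.coroot_mul_form_self hB hγ j
    _ = (coroot γ j - pairing C δ (coroot γ) * coroot δ j) * B γ γ := by
        rw [hΔ.pairing_mul_form_self_comm hB hδ hγ]; ring

lemma coroot_le_of_refl_mem {β γ : ι → ℤ} (hβ : β ∈ Δp) (hγ : γ ∈ Δp)
    (hs : refl C coroot β γ ∈ Δp) (hq : 1 ≤ pairing C β (coroot γ)) (j : ι) :
    coroot β j ≤ coroot γ j := by
  have h := hΔ.coroot_nonneg hB hs j
  rw [hΔ.coroot_refl hB hβ hγ hs] at h
  nlinarith [hΔ.coroot_nonneg hB hβ j]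

/-- Reflect a root of length `c` that is not orthogonal to `αᵢ` in `αᵢ`. -/
lemma forall_form_single_eq_zero_or {c : ℤ} {x : ι → ℤ}
    (hx : ∀ γ ∈ Δp, B γ γ = c → B γ x = 0) (i : ι) :
    (∀ γ ∈ Δp, B γ γ = c → B γ (Pi.single i 1) = 0) ∨ B (Pi.single i 1) x = 0 := by
  by_contra! ⟨⟨γ, hγ, hγc, hγi⟩, hix⟩
  have hi := hΔ.single_mem i
  have hp := hΔ.pairing_mul_form_self hB hi γ
  have hlen : B (refl C coroot (Pi.single i 1) γ) (refl C coroot (Pi.single i 1) γ) = c := by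
    rw [hB.apply_refl_refl _ hi, hγc]
  have hs : B (refl C coroot (Pi.single i 1) γ) x = 0 := by
    rcases hΔ.refl_mem_or_neg_mem _ hi γ hγ with h | h
    · exact hx _ h hlen
    · simpa using hx _ h (by simpa using hlen)
  rw [form_refl_left, hx γ hγ hγc, zero_sub, neg_eq_zero] at hs
  rcases mul_eq_zero.1 hs with h | h
  · exact hγi (by rw [h] at hp; omega)
  · exact hix h

/-- Otherwise the set `S` of simple roots orthogonal to all roots as long as `θ` is nonempty and
orthogonal to the other simple roots, so the part of `θ` supported on `S` is isotropic. -/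
lemma exists_form_single_ne_zero {θ : ι → ℤ} (hθ : θ ∈ Δp) (hθpos : ∀ i, 0 < θ i) (i : ι) :
    ∃ γ ∈ Δp, B γ γ = B θ θ ∧ B γ (Pi.single i 1) ≠ 0 := by
  by_contra! hi
  set S := univ.filter fun a => ∀ γ ∈ Δp, B γ γ = B θ θ → B γ (Pi.single a 1) = 0
  have hS {a k : ι} (ha : a ∈ S) (hk : k ∉ S) : B (Pi.single a 1) (Pi.single k 1) = 0 := by
    rw [hB.isSymm.eq]
    exact (hΔ.forall_form_single_eq_zero_or hB (mem_filter.1 ha).2 k).resolve_left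
      fun h => hk (mem_filter.2 ⟨mem_univ k, h⟩)
  set θS : ι → ℤ := fun k => if k ∈ S then θ k else 0
  have hθS {a : ι} (ha : a ∈ S) : B θS (Pi.single a 1) = 0 := by
    rw [hB.isSymm.eq, form_eq_sum_single, ← (mem_filter.1 ha).2 θ hθ rfl, hB.isSymm.eq,
      form_eq_sum_single]
    refine sum_congr rfl fun k _ => ?_
    by_cases hk : k ∈ S
    · simp [θS, hk]
    · simp [θS, hk, hS ha hk]
  have hθS0 : θS = 0 := by
    by_contra hne
    have h := hB.pos θS hne
    rw [form_eq_sum_single, sum_eq_zero fun k _ => ?_] at h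
    · exact lt_irrefl 0 h
    by_cases hk : k ∈ S
    · rw [hθS hk, mul_zero]
    · simp [θS, hk]
  have hiS : i ∈ S := mem_filter.2 ⟨mem_univ i, hi⟩
  have hθi := congrFun hθS0 i
  simp only [θS, hiS, if_true, Pi.zero_apply] at hθi
  exact (hθpos i).ne' hθi

lemma exists_form_self_eq_form_pos {θ β : ι → ℤ} (hθ : θ ∈ Δp) (hθpos : ∀ i, 0 < θ i)
    (hβ : β ∈ Δp) : ∃ γ ∈ Δp, B γ γ = B θ θ ∧ 0 < B γ β := by
  by_contra! h
  have hperp : ∀ γ ∈ Δp, B γ γ = B θ θ → B γ β = 0 := by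
    refine fun γ hγ hγθ => le_antisymm (h γ hγ hγθ) (not_lt.1 fun hneg => ?_)
    have hp := hΔ.pairing_mul_form_self hB hβ γ
    have hs := hΔ.refl_mem_of_pairing_nonpos hβ hγ
      (nonpos_of_mul_nonpos_left (by omega) (hΔ.form_self_pos hB hβ))
    have := h _ hs (by rw [hB.apply_refl_refl β hβ, hγθ])
    rw [form_refl_left] at this
    omega
  have hβi (i : ι) : B (Pi.single i 1) β = 0 :=
    (hΔ.forall_form_single_eq_zero_or hB hperp i).resolve_left fun hi =>
      let ⟨γ, hγ, hγθ, hγi⟩ := hΔ.exists_form_single_ne_zero hB hθ hθpos i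
      hγi (hi γ hγ hγθ)
  have hββ := hΔ.form_self_pos hB hβ
  rw [form_eq_sum_single, sum_eq_zero fun i _ => by rw [hB.isSymm.eq, hβi, mul_zero]] at hββ
  exact lt_irrefl 0 hββ

end IsPositiveSystem

theorem quantum_root_coroot_le_highest_general
    (C : ι → ι → ℤ)
    (Δp : Finset (ι → ℤ))
    (hpos : ∀ v ∈ Δp, ∀ i, 0 ≤ v i)
    (hsimple : ∀ i, (Pi.single i 1 : ι → ℤ) ∈ Δp)
    (coroot : (ι → ℤ) → (ι → ℤ))
    (hcoroot2 : ∀ β ∈ Δp, pairing C β (coroot β) = 2)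
    (hcoroot_simple : ∀ i, coroot (Pi.single i 1) = Pi.single i 1)
    (hrefl : ∀ β ∈ Δp, ∀ γ ∈ Δp, refl C coroot β γ ∈ Δp ∨ -refl C coroot β γ ∈ Δp)
    (θ : ι → ℤ) (hθ : θ ∈ Δp) (hθhigh : ∀ α ∈ Δp, ∀ i, α i ≤ θ i)
    (β : ι → ℤ) (hβ : β ∈ Δp)
    (hquantum : ((Δp.filter (fun γ => refl C coroot β γ ∉ Δp)).card : ℤ) =
      (∑ γ ∈ Δp, pairing C γ (coroot β)) - 1) :
    ∀ i, 0 ≤ coroot θ i - coroot β i := by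
  have hΔ : IsPositiveSystem C coroot Δp := ⟨hpos, hsimple, hcoroot2, hcoroot_simple, hrefl⟩
  obtain ⟨B, hB⟩ := hΔ.exists_isInvariantForm
  intro j
  rw [sub_nonneg]
  rcases le_or_gt (B θ θ) (B β β) with hlen | hlen
  · exact hΔ.coroot_le_coroot hB hβ hθ (hθhigh β hβ) hlen j
  have hθpos (i : ι) : 0 < θ i := one_pos.trans_le (by simpa using hθhigh _ (hsimple i) i)
  obtain ⟨γ, hγ, hγθ, hγβ⟩ := hΔ.exists_form_self_eq_form_pos hB hθ hθpos hβ
  have hγγ := hΔ.form_self_pos hB hγ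
  have hq : 1 ≤ pairing C β (coroot γ) := by
    have := hΔ.pairing_mul_form_self hB hγ β
    rw [hB.isSymm.eq β γ] at this
    nlinarith
  have hp : 2 ≤ pairing C γ (coroot β) := by
    have := hΔ.pairing_mul_form_self_comm hB hβ hγ
    nlinarith [hΔ.form_self_pos hB hβ, mul_le_mul_of_nonneg_right hq hγγ.le]
  have hs := hΔ.refl_mem_of_two_le_pairing hβ hquantum hγ (by rintro rfl; omega) hp
  calc coroot β j ≤ coroot γ j := hΔ.coroot_le_of_refl_mem hB hβ hγ hs hq j
    _ ≤ coroot θ j := hΔ.coroot_le_coroot hB hγ hθ (hθhigh γ hγ) hγθ.ge j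

/-- Let `Δ⁺` be the positive roots of a finite-dimensional simple Lie algebra `𝔤`,
written in simple-root coordinates, with coroots written in simple-coroot coordinates,
Cartan pairing `C i j = ⟨α_i, α_j^∨⟩`, and highest root `θ`.  The length of the
reflection `s_β` is `ℓ(s_β) = |{γ ∈ Δ⁺ ∣ s_β γ ∉ Δ⁺}|`, and `2⟨ρ, β^∨⟩ = ∑_{γ ∈ Δ⁺}
⟨γ, β^∨⟩`.  If `β` is a quantum root, i.e. `ℓ(s_β) = 2⟨ρ, β^∨⟩ - 1`, then
`θ^∨ - β^∨` is a nonnegative integer combination of the simple coroots. -/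
theorem quantum_root_coroot_le_highest
    (C : ι → ι → ℤ) (hC : ∀ i, C i i = 2)
    (Δp : Finset (ι → ℤ))
    (hpos : ∀ v ∈ Δp, ∀ i, 0 ≤ v i)
    (hsimple : ∀ i, (Pi.single i 1 : ι → ℤ) ∈ Δp)
    (coroot : (ι → ℤ) → (ι → ℤ))
    (hcoroot2 : ∀ β ∈ Δp, pairing C β (coroot β) = 2)
    (hcoroot_simple : ∀ i, coroot (Pi.single i 1) = Pi.single i 1)
    (hrefl : ∀ β ∈ Δp, ∀ γ ∈ Δp, refl C coroot β γ ∈ Δp ∨ -refl C coroot β γ ∈ Δp)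
    (θ : ι → ℤ) (hθ : θ ∈ Δp) (hθhigh : ∀ α ∈ Δp, ∀ i, α i ≤ θ i)
    (β : ι → ℤ) (hβ : β ∈ Δp)
    (hquantum : ((Δp.filter (fun γ => refl C coroot β γ ∉ Δp)).card : ℤ) =
      (∑ γ ∈ Δp, pairing C γ (coroot β)) - 1) :
    ∀ i, 0 ≤ coroot θ i - coroot β i :=
  quantum_root_coroot_le_highest_general C Δp hpos hsimple coroot hcoroot2 hcoroot_simple hrefl θ hθ
    hθhigh β hβ hquantum

end Stmt13
end

section
/- Let $W$ be a finite Weyl group with quantum Bruhat graph $\mathrm{QBG}(W)$. For $v, w_1, w_2 \in W$ define $w_1 \le_v w_2$ iff $\ell(v \Rightarrow w_2) = \ell(v \Rightarrow w_1) + \ell(w_1 \Rightarrow w_2)$, where $\ell(x \Rightarrow y)$ is the length of a shortest directed path from $x$ to $y$ in $\mathrm{QBG}(W)$. Then $\le_v$ is a partial order on $W$ (reflexive, antisymmetric, transitive). -/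
/- Adding the two defining equations of `w₁ ≤_v w₂` and `w₂ ≤_v w₁` gives
`ℓ(w₁ ⇒ w₂) + ℓ(w₂ ⇒ w₁) = 0`, and only the empty path has length `0`; transitivity is the
triangle inequality for `ℓ(· ⇒ ·)`. -/

namespace Stmt16

/-- Data of the quantum Bruhat graph of a finite Weyl group `W`. -/
structure QBGData (W : Type*) [Group W] where
  Pos : Type*
  refl : Pos → W
  len : W → ℕ
  rhoPair : Pos → ℕ
  rhoPair_pos : ∀ α, 1 ≤ rhoPair α

variable {W : Type*} [Group W] (d : QBGData W)

/-- An edge `x → y = x s_α` of `QBG(W)`: either a Bruhat edge (`ℓ(y) = ℓ(x)+1`) or a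
quantum edge (`ℓ(y) = ℓ(x)+1-2⟨ρ,α^∨⟩`). -/
def Edge (x y : W) : Prop :=
  ∃ α, y = x * d.refl α ∧
    (d.len y = d.len x + 1 ∨ d.len y + 2 * d.rhoPair α = d.len x + 1)

/-- Directed paths in `QBG(W)`, recorded by their list of successive vertices. -/
def IsPath (v : W) (p : List W) (w : W) : Prop :=
  List.Chain (Edge d) v p ∧ (v :: p).getLast (List.cons_ne_nil v p) = w

/-- `ℓ(x ⇒ y)`: the length of a shortest directed path from `x` to `y` in `QBG(W)`. -/
noncomputable def dist (x y : W) : ℕ :=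
  sInf {k | ∃ p : List W, IsPath d x p y ∧ p.length = k}

/-- The `v`-tilted Bruhat order: `w₁ ≤_v w₂` iff
`ℓ(v ⇒ w₂) = ℓ(v ⇒ w₁) + ℓ(w₁ ⇒ w₂)`. -/
def tiltedLE (v w₁ w₂ : W) : Prop :=
  dist d v w₂ = dist d v w₁ + dist d w₁ w₂

variable {d}

theorem isPath_iff {x y : W} {p : List W} :
    IsPath d x p y ↔ (x :: p).IsChain (Edge d) ∧ (x :: p).getLast (List.cons_ne_nil x p) = y :=
  Iff.rfl

theorem isPath_nil_iff {x y : W} : IsPath d x [] y ↔ x = y := by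
  simp [isPath_iff]

theorem IsPath.append {x y z : W} {p q : List W} (hp : IsPath d x p y) (hq : IsPath d y q z) :
    IsPath d x (p ++ q) z := by
  rw [isPath_iff] at hp hq ⊢
  refine ⟨List.cons_append .. ▸ hp.1.append hq.1.tail ?_, ?_⟩
  · rw [List.getLast?_eq_getLast (List.cons_ne_nil _ _), hp.2]
    rintro _ ⟨⟩ b hb
    exact hq.1.rel_head? hb
  · cases q <;> simp_all

theorem IsPath.dist_le {x y : W} {p : List W} (hp : IsPath d x p y) : dist d x y ≤ p.length :=
  Nat.sInf_le ⟨p, hp, rfl⟩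

theorem dist_self (x : W) : dist d x x = 0 :=
  Nat.le_zero.mp (isPath_nil_iff.2 rfl).dist_le

section Connected

variable (hconn : ∀ x y : W, ∃ p : List W, IsPath d x p y)
include hconn

theorem exists_isPath_length_eq_dist (x y : W) : ∃ p, IsPath d x p y ∧ p.length = dist d x y :=
  Nat.sInf_mem (s := {k | ∃ p, IsPath d x p y ∧ p.length = k})
    ((hconn x y).elim fun p hp => ⟨p.length, p, hp, rfl⟩)

theorem eq_of_dist_eq_zero {x y : W} (h : dist d x y = 0) : x = y := by
  obtain ⟨p, hp, hlen⟩ := exists_isPath_length_eq_dist hconn x y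
  rw [h, List.length_eq_zero_iff] at hlen
  exact isPath_nil_iff.1 (hlen ▸ hp)

theorem dist_triangle (x y z : W) : dist d x z ≤ dist d x y + dist d y z := by
  obtain ⟨p, hp, hpd⟩ := exists_isPath_length_eq_dist hconn x y
  obtain ⟨q, hq, hqd⟩ := exists_isPath_length_eq_dist hconn y z
  simpa [hpd, hqd] using (hp.append hq).dist_le

end Connected

/-- The tilted Bruhat order `≤_v` is a partial order on `W` (the quantum Bruhat graph
being strongly connected, by Postnikov). -/
theorem tiltedLE_partialOrder
    (hconn : ∀ x y : W, ∃ p : List W, IsPath d x p y) (v : W) :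
    (∀ w, tiltedLE d v w w) ∧
    (∀ w₁ w₂, tiltedLE d v w₁ w₂ → tiltedLE d v w₂ w₁ → w₁ = w₂) ∧
    (∀ w₁ w₂ w₃, tiltedLE d v w₁ w₂ → tiltedLE d v w₂ w₃ → tiltedLE d v w₁ w₃) := by
  unfold tiltedLE
  refine ⟨fun w => by rw [dist_self, add_zero], fun w₁ w₂ h₁₂ h₂₁ => ?_,
    fun w₁ w₂ w₃ h₁₂ h₂₃ => ?_⟩
  · exact eq_of_dist_eq_zero hconn (by omega)
  · have := dist_triangle hconn v w₁ w₃
    have := dist_triangle hconn w₁ w₂ w₃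
    omega

end Stmt16
end
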